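/- arXiv:2605.11288 — 7 statements merged into one kernel-verified Lean document; each statement's English description precedes it below -/
import Mathlib

section
/- For every real ζ with 0 < ζ < 1/2 and every integer m ≥ 2 there exist ε₀ > 0 and, for each ε ∈ (0, ε₀], an n₀ ∈ ℕ such that the following holds for all n ≥ n₀. Let G be an n-vertex graph with minimum degree δ(G) ≥ n^{1−ε}. Then there exist a positive integer s ≤ n^ζ and a partition V(G) = V₁ ∪ … ∪ V_s such that, for every i ∈ [s] and every S ⊆ V_i with |S| = m, the common neighbourhood satisfies |⋂_{v∈S} N_G(v)| ≥ n^{1−ζ} + 1. -/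
/-!
Dependent random choice. For a uniformly random `k`-tuple `w` of vertices let `C_w ⊆ U` be the
vertices of `U` adjacent to all of `w`. Then `𝔼 |C_w| ≥ |U| (D/n)^k` for minimum degree `D`, while
the expected number of `m`-sets in `C_w` with fewer than `K` common neighbours is at most
`n^m K^k / n^k ≤ 1` once `k ζ ≥ 2m` and `K = n^(1-ζ) + 1`. Deleting a vertex of each such set leaves
`A ⊆ U` with `|A| ≥ q |U| - 1`, `q = (D/n)^k = n^(-εk)`, all of whose `m`-sets have `K` common
neighbours. Extracting such sets greedily, the potential `(2/q) log (|U| + 1)` of the uncovered set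
`U` drops by one per step until `|U| ≤ ⌈4/q⌉`, when singletons finish the cover; for `εk ≤ ζ/4` this
uses at most `n^ζ` parts.
-/

open Finset Real Filter

theorem Finset.exists_subset_forall_not_subset {α : Type*} [DecidableEq α] (A : Finset α)
    (ℬ : Finset (Finset α)) (hℬ : ∀ B ∈ ℬ, B.Nonempty) :
    ∃ A' ⊆ A, (∀ B ∈ ℬ, ¬B ⊆ A') ∧ #A ≤ #A' + #ℬ := by
  let pick : ℬ → α := fun B => (hℬ B B.2).choose
  refine ⟨A \ univ.image pick, sdiff_subset, fun B hB hBA => ?_, ?_⟩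
  · exact (mem_sdiff.1 (hBA (hℬ B hB).choose_spec)).2 (mem_image_of_mem pick (mem_univ ⟨B, hB⟩))
  · calc #A ≤ #(A \ univ.image pick) + #(univ.image pick) := card_le_card_sdiff_add_card
      _ ≤ #(A \ univ.image pick) + #ℬ := by
        gcongr
        exact card_image_le.trans_eq (card_attach ..)

lemma two_div_mul_log_add_one_add_one_le {x y q : ℝ} (hq0 : 0 < q) (hq1 : q ≤ 1) (hx : 0 ≤ x)
    (hyq : 4 ≤ y * q) (hxy : x ≤ y - (y * q - 1)) :
    2 / q * log (x + 1) + 1 ≤ 2 / q * log (y + 1) := by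
  have hshrink : x + 1 ≤ (y + 1) * (1 - q / 2) := by nlinarith
  have hlog : log (x + 1) ≤ log (y + 1) - q / 2 :=
    calc log (x + 1) ≤ log ((y + 1) * (1 - q / 2)) := log_le_log (by linarith) hshrink
      _ = log (y + 1) + log (1 - q / 2) := log_mul (by nlinarith) (by linarith)
      _ ≤ log (y + 1) - q / 2 := by linarith [log_le_sub_one_of_pos (by linarith : 0 < 1 - q / 2)]
  calc 2 / q * log (x + 1) + 1 ≤ 2 / q * (log (y + 1) - q / 2) + 1 := by gcongr
    _ = 2 / q * log (y + 1) := by field_simp; ring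

theorem Finset.exists_cover_of_forall_exists_subset {α : Type*} [DecidableEq α]
    {P : Finset α → Prop} (hP : ∀ x, P {x}) {q : ℝ} (hq0 : 0 < q) (hq1 : q ≤ 1)
    (hext : ∀ U : Finset α, ∃ A ⊆ U, P A ∧ #U * q - 1 ≤ #A) (U : Finset α) :
    ∃ L : List (Finset α), (∀ A ∈ L, P A) ∧ (∀ v ∈ U, ∃ A ∈ L, v ∈ A) ∧
      L.length ≤ 2 / q * log (#U + 1) + ⌈4 / q⌉₊ := by
  induction U using Finset.strongInduction with
  | H U ih =>
  by_cases hsmall : #U ≤ ⌈4 / q⌉₊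
  · refine ⟨U.toList.map ({·}), by simpa using fun x _ => hP x,
      fun v hv => ⟨{v}, by simpa using hv, mem_singleton_self v⟩, ?_⟩
    rw [List.length_map, length_toList]
    have : (#U : ℝ) ≤ ⌈4 / q⌉₊ := by exact_mod_cast hsmall
    have : 0 ≤ 2 / q * log (#U + 1) := mul_nonneg (by positivity) (log_nonneg (by simp))
    linarith
  · obtain ⟨A, hAU, hPA, hA⟩ := hext U
    have hUq : 4 ≤ (#U : ℝ) * q := by
      have : 4 / q < #U := (Nat.le_ceil _).trans_lt (by exact_mod_cast not_le.1 hsmall)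
      exact ((div_lt_iff₀ hq0).1 this).le
    have hAne : A.Nonempty := card_pos.1 (by exact_mod_cast (by linarith : (0 : ℝ) < #A))
    obtain ⟨L, hLP, hLU, hLlen⟩ := ih (U \ A) (sdiff_ssubset hAU hAne)
    refine ⟨A :: L, by simpa [hPA] using hLP, fun v hv => ?_, ?_⟩
    · by_cases hvA : v ∈ A
      · exact ⟨A, List.mem_cons_self, hvA⟩
      · obtain ⟨B, hB, hvB⟩ := hLU v (mem_sdiff.2 ⟨hv, hvA⟩)
        exact ⟨B, List.mem_cons_of_mem _ hB, hvB⟩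
    · have hstep := two_div_mul_log_add_one_add_one_le hq0 hq1 (#(U \ A)).cast_nonneg hUq
        (by rw [card_sdiff_of_subset hAU, Nat.cast_sub (card_le_card hAU)]; linarith)
      rw [List.length_cons, Nat.cast_succ]
      linarith

lemma List.exists_forall_mem_getElem {α : Type*} {L : List (Finset α)}
    (h : ∀ v, ∃ A ∈ L, v ∈ A) : ∃ P : α → Fin L.length, ∀ v, v ∈ L[P v] := by
  have : ∀ v, ∃ i : Fin L.length, v ∈ L[i] := fun v => by
    obtain ⟨A, hA, hvA⟩ := h v
    obtain ⟨i, rfl⟩ := List.mem_iff_get.1 hA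
    exact ⟨i, hvA⟩
  choose P hP using this
  exact ⟨P, hP⟩

lemma log_add_one_le_rpow {x a : ℝ} (hx : 1 ≤ x) (ha0 : 0 < a) (ha1 : a ≤ 1) :
    log (x + 1) ≤ 2 / a * x ^ a :=
  calc log (x + 1) ≤ (x + 1) ^ a / a := log_le_rpow_div (by linarith) ha0
    _ ≤ (2 * x) ^ a / a := by gcongr; linarith
    _ = 2 ^ a * x ^ a / a := by rw [mul_rpow zero_le_two (by linarith)]
    _ ≤ 2 ^ (1 : ℝ) * x ^ a / a := by gcongr; norm_num
    _ = 2 / a * x ^ a := by rw [rpow_one]; ring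

lemma eventually_two_mul_log_add_ceil_le {ζ : ℝ} (hζ0 : 0 < ζ) (hζ4 : ζ ≤ 4) :
    ∀ᶠ n : ℕ in atTop, ∀ p : ℝ, 0 ≤ p → p ≤ (n : ℝ) ^ (ζ / 4) →
      2 * p * log (n + 1) + ⌈4 * p⌉₊ ≤ (n : ℝ) ^ ζ := by
  have hlarge := ((tendsto_rpow_atTop (by positivity : 0 < ζ / 2)).comp
    tendsto_natCast_atTop_atTop).eventually_ge_atTop (16 / ζ + 5)
  filter_upwards [hlarge, eventually_ge_atTop 1] with n hn hn1 p hp0 hp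
  have hn1 : (1 : ℝ) ≤ n := by exact_mod_cast hn1
  have hsq : ((n : ℝ) ^ (ζ / 4)) ^ 2 = (n : ℝ) ^ (ζ / 2) := by
    rw [← rpow_mul_natCast (by positivity)]; ring_nf
  have h4 : 1 ≤ (n : ℝ) ^ (ζ / 4) := one_le_rpow hn1 (by positivity)
  have hlog := log_add_one_le_rpow hn1 (by positivity : 0 < ζ / 4) (by linarith)
  calc 2 * p * log (n + 1) + ⌈4 * p⌉₊
      ≤ 2 * (n : ℝ) ^ (ζ / 4) * (2 / (ζ / 4) * (n : ℝ) ^ (ζ / 4)) + (4 * (n : ℝ) ^ (ζ / 4) + 1) := by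
        gcongr
        · exact log_nonneg (by linarith)
        · exact (Nat.ceil_lt_add_one (by positivity)).le.trans (by linarith)
    _ = 16 / ζ * ((n : ℝ) ^ (ζ / 4)) ^ 2 + (4 * (n : ℝ) ^ (ζ / 4) + 1) := by ring
    _ ≤ 16 / ζ * ((n : ℝ) ^ (ζ / 4)) ^ 2 + 5 * ((n : ℝ) ^ (ζ / 4)) ^ 2 := by gcongr; nlinarith
    _ = (16 / ζ + 5) * (n : ℝ) ^ (ζ / 2) := by rw [← hsq]; ring
    _ ≤ (n : ℝ) ^ (ζ / 2) * (n : ℝ) ^ (ζ / 2) := by gcongr; exact hn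
    _ = (n : ℝ) ^ ζ := by rw [← rpow_add (by positivity)]; ring_nf

lemma natCast_pow_mul_rpow_add_one_pow_le {n m k : ℕ} {ζ : ℝ} (hζ : ζ ≤ 1) (hm : 1 ≤ m)
    (hk : 2 * m ≤ k * ζ) (hn : 2 ^ k ≤ n) :
    (n : ℝ) ^ m * ((n : ℝ) ^ (1 - ζ) + 1) ^ k ≤ (n : ℝ) ^ k := by
  have hn1 : (1 : ℝ) ≤ n := by exact_mod_cast Nat.one_le_two_pow.trans hn
  have h2k : (2 : ℝ) ^ k ≤ (n : ℝ) ^ m := by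
    exact_mod_cast hn.trans (Nat.le_self_pow (by omega) n)
  calc (n : ℝ) ^ m * ((n : ℝ) ^ (1 - ζ) + 1) ^ k
      ≤ (n : ℝ) ^ m * (2 * (n : ℝ) ^ (1 - ζ)) ^ k := by
        gcongr; linarith [one_le_rpow hn1 (by linarith : 0 ≤ 1 - ζ)]
    _ = (n : ℝ) ^ m * 2 ^ k * (n : ℝ) ^ ((1 - ζ) * k) := by
        rw [mul_pow, rpow_mul_natCast (by positivity)]; ring
    _ ≤ (n : ℝ) ^ m * (n : ℝ) ^ m * (n : ℝ) ^ ((1 - ζ) * k) := by gcongr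
    _ = (n : ℝ) ^ ((2 * m : ℝ) + (1 - ζ) * k) := by
        rw [rpow_add (by positivity), ← pow_add, ← rpow_natCast]; push_cast; ring_nf
    _ ≤ (n : ℝ) ^ ((k * ζ : ℝ) + (1 - ζ) * k) := by gcongr
    _ = (n : ℝ) ^ k := by rw [← rpow_natCast]; ring_nf

namespace SimpleGraph

variable {V : Type*} [Fintype V] (G : SimpleGraph V) [DecidableRel G.Adj]

def commonNeighborFinset (S : Finset V) : Finset V := {x | ∀ v ∈ S, G.Adj v x}

variable {G}

@[simp]
lemma mem_commonNeighborFinset {S : Finset V} {x : V} :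
    x ∈ G.commonNeighborFinset S ↔ ∀ v ∈ S, G.Adj v x := by
  simp [commonNeighborFinset]

lemma coe_commonNeighborFinset (S : Finset V) :
    (G.commonNeighborFinset S : Set V) = ⋂ v ∈ S, G.neighborSet v := by
  ext; simp

lemma ncard_neighborSet_eq_degree (v : V) : (G.neighborSet v).ncard = G.degree v := by
  rw [← Nat.card_coe_set_eq, Nat.card_eq_fintype_card, card_neighborSet_eq_degree]

lemma commonNeighborFinset_singleton (v : V) :
    G.commonNeighborFinset {v} = G.neighborFinset v := by
  ext; simp

variable (G) in
def IsRich (m : ℕ) (K : ℝ) (A : Finset V) : Prop :=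
  ∀ S ⊆ A, #S = m → K ≤ #(G.commonNeighborFinset S)

lemma isRich_singleton {m : ℕ} (hm : 2 ≤ m) (K : ℝ) (v : V) : G.IsRich m K {v} := by
  intro S hS hSm
  have := card_le_card hS
  simp only [card_singleton] at this
  omega

section DecidableEq

variable [DecidableEq V]

lemma subset_commonNeighborFinset_image_iff {k : ℕ} (w : Fin k → V) (T : Finset V) :
    T ⊆ G.commonNeighborFinset (univ.image w) ↔ ∀ i, w i ∈ G.commonNeighborFinset T := by
  simp only [subset_iff, mem_commonNeighborFinset, mem_image, mem_univ, true_and,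
    forall_exists_index, forall_apply_eq_imp_iff]
  exact ⟨fun h i x hx => (h hx i).symm, fun h x hx i => (h i x hx).symm⟩

lemma card_filter_subset_commonNeighborFinset_image (k : ℕ) (T : Finset V) :
    #{w : Fin k → V | T ⊆ G.commonNeighborFinset (univ.image w)} =
      #(G.commonNeighborFinset T) ^ k := by
  rw [← Fintype.card_piFinset_const]
  congr 1
  ext w
  simp only [mem_filter, mem_univ, true_and, Fintype.mem_piFinset,
    subset_commonNeighborFinset_image_iff]

lemma sum_card_filter_subset_commonNeighborFinset_image (k : ℕ) (𝒯 : Finset (Finset V)) :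
    ∑ w : Fin k → V, #{T ∈ 𝒯 | T ⊆ G.commonNeighborFinset (univ.image w)} =
      ∑ T ∈ 𝒯, #(G.commonNeighborFinset T) ^ k := by
  simp_rw [← card_filter_subset_commonNeighborFinset_image]
  exact sum_card_bipartiteAbove_eq_sum_card_bipartiteBelow _

lemma sum_card_inter_commonNeighborFinset_image (k : ℕ) (U : Finset V) :
    ∑ w : Fin k → V, #(U ∩ G.commonNeighborFinset (univ.image w)) = ∑ x ∈ U, G.degree x ^ k := by
  simp_rw [← filter_mem_eq_inter, ← card_neighborFinset_eq_degree,
    ← commonNeighborFinset_singleton, ← card_filter_subset_commonNeighborFinset_image,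
    singleton_subset_iff]
  exact sum_card_bipartiteAbove_eq_sum_card_bipartiteBelow _

lemma exists_tuple_le_card_sub_card [Nonempty V] (k : ℕ) {D K : ℝ} (hD : 0 ≤ D)
    (hdeg : ∀ v, D ≤ G.degree v) (U : Finset V) (𝒮 : Finset (Finset V))
    (h𝒮 : ∀ S ∈ 𝒮, #(G.commonNeighborFinset S) ≤ K) :
    ∃ w : Fin k → V, #U * D ^ k - #𝒮 * K ^ k ≤
      Fintype.card V ^ k * ((#(U ∩ G.commonNeighborFinset (univ.image w)) : ℝ) -
        #{S ∈ 𝒮 | S ⊆ G.commonNeighborFinset (univ.image w)}) := by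
  have hU : #U * D ^ k ≤ ∑ w : Fin k → V, (#(U ∩ G.commonNeighborFinset (univ.image w)) : ℝ) := by
    rw [← Nat.cast_sum, sum_card_inter_commonNeighborFinset_image, Nat.cast_sum, ← nsmul_eq_mul,
      ← sum_const]
    exact sum_le_sum fun x _ => by push_cast; gcongr; exact hdeg x
  have h𝒮' : ∑ w : Fin k → V, (#{S ∈ 𝒮 | S ⊆ G.commonNeighborFinset (univ.image w)} : ℝ) ≤
      #𝒮 * K ^ k := by
    rw [← Nat.cast_sum, sum_card_filter_subset_commonNeighborFinset_image, Nat.cast_sum,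
      ← nsmul_eq_mul, ← sum_const]
    exact sum_le_sum fun S hS => by push_cast; gcongr; exact h𝒮 S hS
  refine (exists_le_of_sum_le univ_nonempty ?_).imp fun w ⟨_, hw⟩ => hw
  rw [sum_const, card_univ, Fintype.card_pi_const, nsmul_eq_mul, ← mul_sum, sum_sub_distrib]
  push_cast
  gcongr

theorem exists_isRich_subset [Nonempty V] {m : ℕ} (hm : 0 < m) (k : ℕ) {D K : ℝ} (hD : 0 ≤ D)
    (hK : 0 ≤ K) (hdeg : ∀ v, D ≤ G.degree v) (U : Finset V) :
    ∃ A ⊆ U, G.IsRich m K A ∧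
      #U * D ^ k - Fintype.card V ^ m * K ^ k ≤ Fintype.card V ^ k * #A := by
  set 𝒮 : Finset (Finset V) := {S ∈ U.powersetCard m | #(G.commonNeighborFinset S) < K}
  have h𝒮 : (#𝒮 : ℝ) ≤ Fintype.card V ^ m :=
    calc (#𝒮 : ℝ) ≤ #(U.powersetCard m) := by exact_mod_cast card_filter_le _ _
      _ = (#U).choose m := by rw [card_powersetCard]
      _ ≤ (#U : ℝ) ^ m := by exact_mod_cast Nat.choose_le_pow _ _
      _ ≤ Fintype.card V ^ m := by gcongr; exact_mod_cast card_le_univ U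
  obtain ⟨w, hw⟩ :=
    G.exists_tuple_le_card_sub_card k hD hdeg U 𝒮 fun S hS => (mem_filter.1 hS).2.le
  set C := G.commonNeighborFinset (univ.image w)
  obtain ⟨A, hAC, hA𝒮, hcard⟩ := (U ∩ C).exists_subset_forall_not_subset {S ∈ 𝒮 | S ⊆ C}
    fun S hS => card_pos.1 <| by
      rw [(mem_powersetCard.1 (mem_filter.1 (mem_filter.1 hS).1).1).2]; exact hm
  refine ⟨A, hAC.trans inter_subset_left, fun S hSA hSm => ?_, ?_⟩
  · by_contra! hlt
    have hSUC : S ⊆ U ∩ C := hSA.trans hAC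
    refine hA𝒮 S (mem_filter.2 ⟨mem_filter.2 ⟨?_, hlt⟩, hSUC.trans inter_subset_right⟩) hSA
    exact mem_powersetCard.2 ⟨hSUC.trans inter_subset_left, hSm⟩
  · have hcard' : (#(U ∩ C) : ℝ) ≤ #A + #{S ∈ 𝒮 | S ⊆ C} := by exact_mod_cast hcard
    calc #U * D ^ k - Fintype.card V ^ m * K ^ k ≤ #U * D ^ k - #𝒮 * K ^ k := by gcongr
      _ ≤ _ := hw
      _ ≤ Fintype.card V ^ k * #A := by gcongr; linarith

theorem exists_isRich_cover [Nonempty V] {m : ℕ} (hm : 2 ≤ m) (k : ℕ) {D K : ℝ} (hD : 0 < D)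
    (hK : 0 ≤ K) (hdeg : ∀ v, D ≤ G.degree v)
    (hKk : (Fintype.card V : ℝ) ^ m * K ^ k ≤ Fintype.card V ^ k) :
    ∃ L : List (Finset V), (∀ A ∈ L, G.IsRich m K A) ∧ (∀ v, ∃ A ∈ L, v ∈ A) ∧
      L.length ≤ 2 * (Fintype.card V / D) ^ k * log (Fintype.card V + 1) +
        ⌈4 * (Fintype.card V / D) ^ k⌉₊ := by
  have hn : 0 < (Fintype.card V : ℝ) := by simp [Fintype.card_pos]
  have hDn : D ≤ Fintype.card V := by
    obtain ⟨v⟩ := ‹Nonempty V›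
    exact (hdeg v).trans (by exact_mod_cast (G.degree_lt_card_verts v).le)
  have hq0 : 0 < (D / Fintype.card V) ^ k := by positivity
  have hq1 : (D / Fintype.card V) ^ k ≤ 1 := pow_le_one₀ (by positivity) ((div_le_one hn).2 hDn)
  have hext : ∀ U, ∃ A ⊆ U, G.IsRich m K A ∧ #U * (D / Fintype.card V) ^ k - 1 ≤ #A := by
    intro U
    obtain ⟨A, hAU, hA, hcard⟩ := G.exists_isRich_subset (m := m) (by omega) k hD.le hK hdeg U
    refine ⟨A, hAU, hA, ?_⟩
    rw [div_pow, ← mul_div_assoc, sub_le_iff_le_add, div_le_iff₀ (by positivity)]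
    linarith
  obtain ⟨L, hLP, hLcov, hLlen⟩ :=
    Finset.exists_cover_of_forall_exists_subset (isRich_singleton hm K) hq0 hq1 hext univ
  refine ⟨L, hLP, fun v => hLcov v (mem_univ v), ?_⟩
  simpa only [card_univ, div_eq_mul_inv _ ((D / _) ^ k), ← inv_pow, inv_div] using hLlen

end DecidableEq

end SimpleGraph

theorem stmt5 (ζ : ℝ) (hζ0 : 0 < ζ) (hζ1 : ζ < 1 / 2) (m : ℕ) (hm : 2 ≤ m) :
    ∃ ε₀ : ℝ, 0 < ε₀ ∧ ∀ ε : ℝ, 0 < ε → ε ≤ ε₀ →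
      ∃ n₀ : ℕ, ∀ n : ℕ, n₀ ≤ n →
        ∀ G : SimpleGraph (Fin n),
          (∀ v : Fin n, (n : ℝ) ^ (1 - ε) ≤ ((G.neighborSet v).ncard : ℝ)) →
          ∃ s : ℕ, 0 < s ∧ (s : ℝ) ≤ (n : ℝ) ^ ζ ∧
            ∃ P : Fin n → Fin s,
              ∀ (i : Fin s) (S : Finset (Fin n)), (∀ v ∈ S, P v = i) → S.card = m →
                (n : ℝ) ^ (1 - ζ) + 1 ≤ (((⋂ v ∈ S, G.neighborSet v)).ncard : ℝ) := by
  obtain ⟨k, hk⟩ := exists_nat_gt (2 * m / ζ)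
  have hkζ : 2 * (m : ℝ) ≤ k * ζ := ((div_lt_iff₀ hζ0).1 hk).le
  have hk0 : (0 : ℝ) < k := lt_trans (by positivity) hk
  refine ⟨ζ / (4 * k), by positivity, fun ε hε hεζ => ?_⟩
  have hεk : ε * k ≤ ζ / 4 := by rw [le_div_iff₀ (by positivity)] at hεζ; linarith
  obtain ⟨n₀, hn₀⟩ := eventually_atTop.1 ((eventually_ge_atTop (2 ^ k)).and
    (eventually_two_mul_log_add_ceil_le hζ0 (by linarith)))
  refine ⟨n₀, fun n hn G hG => ?_⟩
  classical
  obtain ⟨hnk, hbound⟩ := hn₀ n hn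
  have hn1 : 1 ≤ n := Nat.one_le_two_pow.trans hnk
  have : Nonempty (Fin n) := ⟨⟨0, hn1⟩⟩
  have hn1' : (1 : ℝ) ≤ n := by exact_mod_cast hn1
  obtain ⟨L, hrich, hcover, hlen⟩ := G.exists_isRich_cover hm k (by positivity)
    (by positivity : 0 ≤ (n : ℝ) ^ (1 - ζ) + 1) (fun v => G.ncard_neighborSet_eq_degree v ▸ hG v)
    (by simpa using natCast_pow_mul_rpow_add_one_pow_le (by linarith) (by omega) hkζ hnk)
  have hp : ((n : ℝ) / (n : ℝ) ^ (1 - ε)) ^ k ≤ (n : ℝ) ^ (ζ / 4) := by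
    rw [rpow_sub (by positivity), rpow_one, div_div_cancel₀ (by positivity),
      ← rpow_mul_natCast (by positivity)]
    exact rpow_le_rpow_of_exponent_le hn1' hεk
  rw [Fintype.card_fin] at hlen
  obtain ⟨P, hP⟩ := List.exists_forall_mem_getElem hcover
  refine ⟨L.length, (P ⟨0, hn1⟩).pos, ?_, P, fun i S hS hSm => ?_⟩
  · simpa using hlen.trans (hbound _ (by positivity) hp)
  · rw [← G.coe_commonNeighborFinset, Set.ncard_coe_finset]
    exact hrich L[i] (List.getElem_mem _) S (fun v hv => by rw [← hS v hv]; exact hP v) hSm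
end

section
/- For every real ζ with 0 < ζ < 1/2 and every integer m ≥ 2, setting ℓ := ⌈2m/ζ⌉, there exist ε₀ > 0 and, for each ε ∈ (0, ε₀], an n₀ ∈ ℕ such that the following holds for all n ≥ n₀. Let G' be a bipartite graph with parts A and B satisfying |A| = ⌊n/2⌋ and |B| = n − ⌊n/2⌋, in which every vertex has degree at least n^{1−2ε}. Then there exists a set M ⊆ A with |M| = ⌊n^{6ε}⌋ such that (a) |N_{G'}(v) ∩ M| ≥ n^{3ε} for every v ∈ B, and (b) there is no set S ⊆ B with |S| = m satisfying both |⋂_{v∈S} N_{G'}(v)| ≤ n^{1−ζ} and |⋂_{v∈S} N_{G'}(v) ∩ M| ≥ ℓ. -/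
/-!
Choose `M` among the `k`-subsets of `A`, `k = ⌊n^{6ε}⌋`, avoiding two kinds of bad events, each
counted exactly. For `v ∈ B` (with `d ≤ |N(v)|` and `a = |A|`), the `M` meeting `N(v)` in fewer
than `t = ⌈n^{3ε}⌉` points are counted by the first `t` terms of Vandermonde's sum
`∑ⱼ C(d, j) C(a - d, k - j) = C(a, k)`. Over `j < 2t` consecutive terms grow by a factor of at
least `(d - 2t)(k - 2t) / (2ta) ≥ 2` (it is about `n^ε`), so each of the first `t` terms is at most
`2^{-t} C(a, k)`, and `t 2^{-t} ≤ 1 / (4n)` since `t ≈ n^{3ε}`.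
For an `m`-set `S` whose common neighbourhood `X` has at most `n^{1-ζ}` vertices, at most
`C(|X|, ℓ) C(a - ℓ, k - ℓ)` of the `M` meet `X` in `ℓ` points; by
`C(a, k) C(k, ℓ) = C(a, ℓ) C(a - ℓ, k - ℓ)` this is the fraction
`C(|X|, ℓ) C(k, ℓ) / C(a, ℓ) ≤ (4 n^{6ε-ζ})^ℓ` of all `k`-sets, and `(ζ - 6ε) ℓ ≥ 3m/2` by the
choice `ℓ ≥ 2m/ζ`, which beats the `n^m` choices of `S`.
-/

open Finset Filter

namespace Nat

theorem choose_mul_choose_le_choose_add {d e j k : ℕ} (hjk : j ≤ k) :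
    d.choose j * e.choose (k - j) ≤ (d + e).choose k := by
  rw [Nat.add_choose_eq]
  exact single_le_sum (f := fun ij : ℕ × ℕ => d.choose ij.1 * e.choose ij.2)
    (fun _ _ => Nat.zero_le _) (a := (j, k - j)) (mem_antidiagonal.2 (Nat.add_sub_cancel' hjk))

theorem choose_mul_choose_sub_mul_eq (d e : ℕ) {j k : ℕ} (hjk : j < k) :
    d.choose j * e.choose (k - j) * ((d - j) * (k - j)) =
      d.choose (j + 1) * e.choose (k - (j + 1)) * ((j + 1) * (e - (k - (j + 1)))) := by
  rw [show k - j = k - (j + 1) + 1 by omega]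
  generalize k - (j + 1) = i
  calc _ = d.choose j * (d - j) * (e.choose (i + 1) * (i + 1)) := by ring
    _ = _ := by rw [← Nat.choose_succ_right_eq d j, Nat.choose_succ_right_eq e i]; ring

theorem choose_mul_choose_sub_mul_pow_le {d e k Q P : ℕ} (r j : ℕ) (hjr : j + r ≤ k)
    (hratio : ∀ i ∈ Ico j (j + r), Q ≤ (d - i) * (k - i) ∧ (i + 1) * (e - (k - (i + 1))) ≤ P) :
    d.choose j * e.choose (k - j) * Q ^ r ≤ d.choose (j + r) * e.choose (k - (j + r)) * P ^ r := by
  induction r generalizing j with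
  | zero => simp
  | succ r ih =>
    obtain ⟨hQ, hP⟩ := hratio j (by simp)
    have ih' := ih (j + 1) (by omega) fun i hi => hratio i (by simp at hi ⊢; omega)
    rw [show j + 1 + r = j + (r + 1) by omega] at ih'
    calc d.choose j * e.choose (k - j) * Q ^ (r + 1)
        ≤ d.choose j * e.choose (k - j) * ((d - j) * (k - j)) * Q ^ r := by
          rw [pow_succ', ← mul_assoc]; gcongr
      _ = d.choose (j + 1) * e.choose (k - (j + 1)) * Q ^ r * ((j + 1) * (e - (k - (j + 1)))) := by
          rw [choose_mul_choose_sub_mul_eq d e (by omega)]; ring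
      _ ≤ d.choose (j + (r + 1)) * e.choose (k - (j + (r + 1))) * P ^ r * P := by gcongr
      _ = _ := by ring

end Nat

namespace Finset

variable {α : Type*} [DecidableEq α]

theorem card_filter_card_inter_eq_le {A D : Finset α} (hD : D ⊆ A) (k j : ℕ) :
    #{M ∈ A.powersetCard k | #(M ∩ D) = j} ≤ (#D).choose j * (#A - #D).choose (k - j) := by
  rw [← card_sdiff_of_subset hD, ← card_powersetCard, ← card_powersetCard, ← card_product]
  refine card_le_card_of_injOn (fun M => (M ∩ D, M \ D)) (fun M hM => ?_) fun M _ M' _ h => ?_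
  · obtain ⟨hMk, rfl⟩ := mem_filter.1 (mem_coe.1 hM)
    obtain ⟨hMA, rfl⟩ := mem_powersetCard.1 hMk
    rw [mem_coe, mem_product, mem_powersetCard, mem_powersetCard]
    refine ⟨⟨inter_subset_right, rfl⟩, sdiff_subset_sdiff hMA le_rfl, ?_⟩
    have := card_sdiff_add_card_inter M D
    simp only at this ⊢
    omega
  · simp only [Prod.mk.injEq] at h
    rw [← sdiff_union_inter M D, ← sdiff_union_inter M' D, h.1, h.2]

theorem card_filter_card_inter_lt_mul_pow_le {A D : Finset α} (hD : D ⊆ A) {d k t : ℕ}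
    (hd : d ≤ #D) (htk : 2 * t ≤ k) :
    #{M ∈ A.powersetCard k | #(M ∩ D) < t} * ((d - 2 * t) * (k - 2 * t)) ^ t ≤
      t * (2 * t * #A) ^ t * (#A).choose k := by
  have hfiber : #{M ∈ A.powersetCard k | #(M ∩ D) < t} ≤
      ∑ j ∈ range t, #{M ∈ A.powersetCard k | #(M ∩ D) = j} := by
    rw [card_eq_sum_card_fiberwise (f := fun M => #(M ∩ D)) (t := range t)
      fun M hM => mem_range.2 (mem_filter.1 hM).2]
    exact sum_le_sum fun j _ => card_le_card (by intro M; simp +contextual)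
  have hterm : ∀ j ∈ range t, #{M ∈ A.powersetCard k | #(M ∩ D) = j} *
      ((d - 2 * t) * (k - 2 * t)) ^ t ≤ (2 * t * #A) ^ t * (#A).choose k := by
    intro j hj
    rw [mem_range] at hj
    calc _ ≤ (#D).choose j * (#A - #D).choose (k - j) * ((d - 2 * t) * (k - 2 * t)) ^ t := by
          gcongr; exact card_filter_card_inter_eq_le hD k j
      _ ≤ (#D).choose (j + t) * (#A - #D).choose (k - (j + t)) * (2 * t * #A) ^ t := by
          refine Nat.choose_mul_choose_sub_mul_pow_le t j (by omega) fun i hi => ?_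
          rw [mem_Ico] at hi
          exact ⟨by gcongr <;> omega, by gcongr <;> omega⟩
      _ ≤ _ := by
          rw [mul_comm]
          gcongr
          simpa [Nat.add_sub_cancel' (card_le_card hD)] using
            Nat.choose_mul_choose_le_choose_add (d := #D) (e := #A - #D) (by omega : j + t ≤ k)
  calc _ ≤ (∑ j ∈ range t, #{M ∈ A.powersetCard k | #(M ∩ D) = j}) *
        ((d - 2 * t) * (k - 2 * t)) ^ t := by gcongr
    _ ≤ ∑ j ∈ range t, (2 * t * #A) ^ t * (#A).choose k := by
        rw [sum_mul]; exact sum_le_sum hterm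
    _ = _ := by simp [mul_assoc]

theorem card_filter_le_card_inter_le {A X : Finset α} (hX : X ⊆ A) {k l : ℕ} (hlk : l ≤ k) :
    #{M ∈ A.powersetCard k | l ≤ #(M ∩ X)} ≤ (#X).choose l * (#A - l).choose (k - l) := by
  have hcover : {M ∈ A.powersetCard k | l ≤ #(M ∩ X)} ⊆
      (X.powersetCard l).biUnion fun T => {M ∈ A.powersetCard k | T ⊆ M} := by
    intro M hM
    rw [mem_filter] at hM
    obtain ⟨T, hT, rfl⟩ := exists_subset_card_eq hM.2
    exact mem_biUnion.2 ⟨T, mem_powersetCard.2 ⟨hT.trans inter_subset_right, rfl⟩,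
      mem_filter.2 ⟨hM.1, hT.trans inter_subset_left⟩⟩
  calc _ ≤ ∑ T ∈ X.powersetCard l, #{M ∈ A.powersetCard k | T ⊆ M} :=
        (card_le_card hcover).trans card_biUnion_le
    _ = ∑ T ∈ X.powersetCard l, (#A - l).choose (k - l) := by
        refine sum_congr rfl fun T hT => ?_
        obtain ⟨hTX, rfl⟩ := mem_powersetCard.1 hT
        exact card_filter_powersetCard_subset T A k (hTX.trans hX) hlk
    _ = _ := by simp

variable {ι κ : Type*}

theorem four_mul_sum_card_filter_card_inter_lt_le {A : Finset α} {B : Finset ι}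
    {D : ι → Finset α} {d k t : ℕ} (hDA : ∀ v ∈ B, D v ⊆ A) (hD : ∀ v ∈ B, d ≤ #(D v))
    (hBt : 4 * #B * t ≤ 2 ^ t) (htA : 4 * t * #A < (d - 2 * t) * (k - 2 * t)) :
    4 * ∑ v ∈ B, #{M ∈ A.powersetCard k | #(M ∩ D v) < t} ≤ (#A).choose k := by
  set Q := (d - 2 * t) * (k - 2 * t)
  have hQ : 0 < Q ^ t := pow_pos (Nat.zero_lt_of_lt htA) t
  have htk : 2 * t ≤ k := by
    by_contra h
    simp [Q, Nat.sub_eq_zero_of_le (not_le.1 h).le] at htA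
  refine Nat.le_of_mul_le_mul_right ?_ hQ
  calc 4 * (∑ v ∈ B, #{M ∈ A.powersetCard k | #(M ∩ D v) < t}) * Q ^ t
      = 4 * ∑ v ∈ B, #{M ∈ A.powersetCard k | #(M ∩ D v) < t} * Q ^ t := by
        rw [mul_assoc, sum_mul]
    _ ≤ 4 * ∑ v ∈ B, t * (2 * t * #A) ^ t * (#A).choose k :=
        Nat.mul_le_mul_left 4 (sum_le_sum fun v hv =>
          card_filter_card_inter_lt_mul_pow_le (hDA v hv) (hD v hv) htk)
    _ = 4 * #B * t * (2 * t * #A) ^ t * (#A).choose k := by simp [mul_assoc]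
    _ ≤ 2 ^ t * (2 * t * #A) ^ t * (#A).choose k := by gcongr
    _ = (4 * t * #A) ^ t * (#A).choose k := by rw [← mul_pow]; ring_nf
    _ ≤ (#A).choose k * Q ^ t := by rw [mul_comm]; gcongr

theorem four_mul_sum_card_filter_le_card_inter_le {A : Finset α} {𝒮 : Finset κ}
    {X : κ → Finset α} {x k l : ℕ} (hXA : ∀ S ∈ 𝒮, X S ⊆ A) (hX : ∀ S ∈ 𝒮, #(X S) ≤ x)
    (hlk : l ≤ k) (h𝒮 : 4 * #𝒮 * x.choose l * k.choose l ≤ (#A).choose l) :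
    4 * ∑ S ∈ 𝒮, #{M ∈ A.powersetCard k | l ≤ #(M ∩ X S)} ≤ (#A).choose k := by
  refine Nat.le_of_mul_le_mul_right ?_ (Nat.choose_pos hlk)
  calc 4 * (∑ S ∈ 𝒮, #{M ∈ A.powersetCard k | l ≤ #(M ∩ X S)}) * k.choose l
      ≤ 4 * (∑ S ∈ 𝒮, x.choose l * (#A - l).choose (k - l)) * k.choose l := by
        gcongr with S hS
        exact (card_filter_le_card_inter_le (hXA S hS) hlk).trans (by gcongr; exact hX S hS)
    _ = 4 * #𝒮 * x.choose l * k.choose l * (#A - l).choose (k - l) := by simp; ring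
    _ ≤ (#A).choose l * (#A - l).choose (k - l) := by gcongr
    _ = (#A).choose k * k.choose l := (Nat.choose_mul hlk).symm

theorem exists_mem_powersetCard_forall_le_card_inter_and_forall_card_inter_lt
    {A : Finset α} {B : Finset ι} {𝒮 : Finset κ} {D : ι → Finset α} {X : κ → Finset α}
    {d x k t l : ℕ} (hDA : ∀ v ∈ B, D v ⊆ A) (hD : ∀ v ∈ B, d ≤ #(D v))
    (hXA : ∀ S ∈ 𝒮, X S ⊆ A) (hX : ∀ S ∈ 𝒮, #(X S) ≤ x) (hkA : k ≤ #A) (hlk : l ≤ k)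
    (hBt : 4 * #B * t ≤ 2 ^ t) (htA : 4 * t * #A < (d - 2 * t) * (k - 2 * t))
    (h𝒮 : 4 * #𝒮 * x.choose l * k.choose l ≤ (#A).choose l) :
    ∃ M ∈ A.powersetCard k, (∀ v ∈ B, t ≤ #(M ∩ D v)) ∧ ∀ S ∈ 𝒮, #(M ∩ X S) < l := by
  have hbad : #((B.biUnion fun v => {M ∈ A.powersetCard k | #(M ∩ D v) < t}) ∪
      𝒮.biUnion fun S => {M ∈ A.powersetCard k | l ≤ #(M ∩ X S)}) < #(A.powersetCard k) := by
    have h1 := four_mul_sum_card_filter_card_inter_lt_le hDA hD hBt htA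
    have h2 := four_mul_sum_card_filter_le_card_inter_le hXA hX hlk h𝒮
    have := Nat.choose_pos hkA
    rw [card_powersetCard]
    refine (card_union_le _ _).trans_lt ?_
    have := card_biUnion_le (s := B) (t := fun v => {M ∈ A.powersetCard k | #(M ∩ D v) < t})
    have := card_biUnion_le (s := 𝒮) (t := fun S => {M ∈ A.powersetCard k | l ≤ #(M ∩ X S)})
    omega
  obtain ⟨M, hM, hMbad⟩ := exists_mem_notMem_of_card_lt_card hbad
  simp only [mem_union, mem_biUnion, mem_filter, not_or, not_exists, not_and, not_lt] at hMbad
  exact ⟨M, hM, fun v hv => hMbad.1 v hv hM, fun S hS => not_le.1 (hMbad.2 S hS hM)⟩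

end Finset

theorem eventually_le_natCast_rpow {δ : ℝ} (hδ : 0 < δ) (C : ℝ) :
    ∀ᶠ n : ℕ in atTop, C ≤ (n : ℝ) ^ δ :=
  ((tendsto_rpow_atTop hδ).comp tendsto_natCast_atTop_atTop).eventually_ge_atTop C

theorem eventually_floor_rpow_le_half {δ : ℝ} (hδ : δ < 1) :
    ∀ᶠ n : ℕ in atTop, ⌊(n : ℝ) ^ δ⌋₊ ≤ n / 2 := by
  filter_upwards [eventually_le_natCast_rpow (sub_pos.2 hδ) 2, eventually_gt_atTop 0] with n hn hn0
  rw [Nat.le_div_iff_mul_le two_pos]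
  have : (⌊(n : ℝ) ^ δ⌋₊ * 2 : ℝ) ≤ n :=
    calc (⌊(n : ℝ) ^ δ⌋₊ * 2 : ℝ) ≤ (n : ℝ) ^ δ * (n : ℝ) ^ (1 - δ) := by
          gcongr; exact Nat.floor_le (by positivity)
      _ = n := by rw [← Real.rpow_add (by exact_mod_cast hn0)]; simp
  exact_mod_cast this

theorem eventually_four_mul_rpow_le_two_pow (c : ℝ) :
    ∀ᶠ s : ℕ in atTop, 4 * (s : ℝ) ^ c ≤ 2 ^ s := by
  have h := (isLittleO_rpow_exp_pos_mul_atTop c (Real.log_pos one_lt_two)).def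
    (c := 1 / 4) (by norm_num)
  filter_upwards [tendsto_natCast_atTop_atTop.eventually h] with s hs
  rw [Real.norm_of_nonneg (by positivity), Real.norm_of_nonneg (by positivity),
    ← Real.rpow_def_of_pos two_pos, Real.rpow_natCast] at hs
  linarith

theorem eventually_four_mul_mul_ceil_rpow_le_two_pow {δ : ℝ} (hδ : 0 < δ) :
    ∀ᶠ n : ℕ in atTop, 4 * n * ⌈(n : ℝ) ^ δ⌉₊ ≤ 2 ^ ⌈(n : ℝ) ^ δ⌉₊ := by
  have ht : Tendsto (fun n : ℕ => ⌈(n : ℝ) ^ δ⌉₊) atTop atTop :=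
    (tendsto_natCast_atTop_iff (R := ℝ)).1 <| tendsto_atTop_mono (fun n => Nat.le_ceil _) <|
      (tendsto_rpow_atTop hδ).comp tendsto_natCast_atTop_atTop
  filter_upwards [ht.eventually (eventually_four_mul_rpow_le_two_pow (1 / δ + 1)),
    ht.eventually (eventually_gt_atTop 0)] with n hn ht0
  set t := ⌈(n : ℝ) ^ δ⌉₊
  have hnt : (n : ℝ) ≤ (t : ℝ) ^ (1 / δ) := by
    calc (n : ℝ) = ((n : ℝ) ^ δ) ^ (1 / δ) := by
          rw [← Real.rpow_mul (Nat.cast_nonneg n), mul_one_div_cancel hδ.ne', Real.rpow_one]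
      _ ≤ (t : ℝ) ^ (1 / δ) := by gcongr; exact Nat.le_ceil _
  have : (4 * n * t : ℝ) ≤ 2 ^ t := by
    calc (4 * n * t : ℝ) ≤ 4 * ((t : ℝ) ^ (1 / δ) * t) := by rw [mul_assoc]; gcongr
      _ = 4 * (t : ℝ) ^ (1 / δ + 1) := by
          rw [Real.rpow_add (by exact_mod_cast ht0), Real.rpow_one]
      _ ≤ 2 ^ t := hn
  exact_mod_cast this

theorem four_mul_mul_lt_sub_mul_sub {n a t d k : ℕ} {z : ℝ} (hz : 33 ≤ z) (hn : 16 * z ^ 5 ≤ n)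
    (ha : 2 * a ≤ n) (ht : t ≤ z ^ 3 + 1) (hd : n ≤ d * z ^ 2) (hk : z ^ 6 - 1 ≤ k) :
    4 * t * a < (d - 2 * t) * (k - 2 * t) := by
  have hz3 : 33 ≤ z ^ 3 := by nlinarith [pow_le_pow_left₀ (by norm_num) hz 3]
  have hn0 : (0 : ℝ) < n := lt_of_lt_of_le (by positivity) hn
  have hdz : 16 * z ^ 3 ≤ d := by
    refine le_of_mul_le_mul_right ?_ (by positivity : 0 < z ^ 2)
    linarith [show z ^ 5 = z ^ 3 * z ^ 2 by ring]
  have hdt : 2 * t ≤ d := by exact_mod_cast (by linarith : (2 * t : ℝ) ≤ d)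
  have hkt : 2 * t ≤ k := by
    exact_mod_cast (by nlinarith [show z ^ 6 = z ^ 3 * z ^ 3 by ring] : (2 * t : ℝ) ≤ k)
  rw [← Nat.cast_lt (α := ℝ)]
  push_cast [Nat.cast_sub hdt, Nat.cast_sub hkt]
  have hd2 : (d : ℝ) / 2 ≤ d - 2 * t := by linarith
  have hk2 : z ^ 6 / 2 ≤ k - 2 * t := by nlinarith [show z ^ 6 = z ^ 3 * z ^ 3 by ring]
  calc (4 * t * a : ℝ) ≤ 4 * (z ^ 3 + 1) * (n / 2) := by
        gcongr
        rw [le_div_iff₀ two_pos, mul_comm]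
        exact_mod_cast ha
    _ ≤ 4 * n * z ^ 3 := by nlinarith
    _ < n * z ^ 4 / 4 := by
        have := mul_pos (mul_pos hn0 (by positivity : (0 : ℝ) < z ^ 3)) (by linarith : 0 < z - 16)
        linarith [show z ^ 4 = z ^ 3 * z by ring]
    _ ≤ d * z ^ 2 * z ^ 4 / 4 := by gcongr
    _ = (d / 2) * (z ^ 6 / 2) := by ring
    _ ≤ (d - 2 * t) * (k - 2 * t) := by gcongr; linarith

theorem eventually_four_mul_ceil_mul_lt_sub_mul_sub {ε : ℝ} (hε : 0 < ε) (hε1 : ε ≤ 1 / 24) :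
    ∀ᶠ n : ℕ in atTop, 4 * ⌈(n : ℝ) ^ (3 * ε)⌉₊ * (n / 2) <
      (⌈(n : ℝ) ^ (1 - 2 * ε)⌉₊ - 2 * ⌈(n : ℝ) ^ (3 * ε)⌉₊) *
        (⌊(n : ℝ) ^ (6 * ε)⌋₊ - 2 * ⌈(n : ℝ) ^ (3 * ε)⌉₊) := by
  filter_upwards [eventually_le_natCast_rpow hε 33,
    eventually_le_natCast_rpow (by linarith : 0 < 1 - 5 * ε) 16] with n hz hn16
  set z := (n : ℝ) ^ ε
  have hn : (0 : ℝ) < n :=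
    Nat.cast_pos.2 (Nat.pos_of_ne_zero fun h => by norm_num [z, h, Real.zero_rpow hε.ne'] at hz)
  have hpow : ∀ r : ℝ, ∀ j : ℕ, (n : ℝ) ^ (r + j * ε) = (n : ℝ) ^ r * z ^ j := fun r j => by
    rw [Real.rpow_add hn, mul_comm (j : ℝ), Real.rpow_mul_natCast hn.le]
  have h3 := hpow 0 3
  have h6 := hpow 0 6
  have hd := hpow (1 - 2 * ε) 2
  have hn5 := hpow (1 - 5 * ε) 5
  norm_num at h3 h6 hd hn5
  refine four_mul_mul_lt_sub_mul_sub hz (by rw [hn5]; gcongr) (by omega) ?_ ?_ ?_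
  · linarith [Nat.ceil_lt_add_one (Real.rpow_nonneg hn.le (3 * ε))]
  · exact hd.le.trans (by gcongr; exact Nat.le_ceil _)
  · linarith [Nat.lt_floor_add_one ((n : ℝ) ^ (6 * ε))]

theorem four_mul_pow_mul_choose_mul_choose_le_choose {n m x k a l : ℕ} {γ : ℝ}
    (hn : 4 * 4 ^ l ≤ n) (hγ : (m : ℝ) + 1 ≤ γ * l) (hxk : (x * k : ℝ) ≤ (n : ℝ) ^ (1 - γ))
    (ha : n ≤ 4 * (a + 1 - l)) :
    4 * n ^ m * x.choose l * k.choose l ≤ a.choose l := by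
  have hn1 : (1 : ℝ) ≤ n := by exact_mod_cast le_trans (Nat.one_le_iff_ne_zero.2 (by positivity)) hn
  have hn0 : (0 : ℝ) < n := by linarith
  have hgrowth : (4 * 4 ^ l * n ^ m : ℝ) ≤ (n : ℝ) ^ (γ * l) :=
    calc (4 * 4 ^ l * n ^ m : ℝ) ≤ n * n ^ m := by gcongr; exact_mod_cast hn
      _ = (n : ℝ) ^ ((m : ℝ) + 1) := by rw [Real.rpow_add_one hn0.ne', Real.rpow_natCast]; ring
      _ ≤ (n : ℝ) ^ (γ * l) := Real.rpow_le_rpow_of_exponent_le hn1 hγ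
  have hsplit : (n : ℝ) ^ l = (n : ℝ) ^ (γ * l) * ((n : ℝ) ^ (1 - γ)) ^ l := by
    rw [← Real.rpow_mul_natCast hn0.le, ← Real.rpow_add hn0, ← Real.rpow_natCast]
    ring_nf
  have hfac : (1 : ℝ) ≤ l.factorial := by exact_mod_cast l.factorial_pos
  suffices (4 * n ^ m * x.choose l * k.choose l : ℝ) ≤ a.choose l by exact_mod_cast this
  calc (4 * n ^ m * x.choose l * k.choose l : ℝ)
      ≤ 4 * n ^ m * (x ^ l / l.factorial) * (k ^ l / l.factorial) := by
        gcongr <;> exact Nat.choose_le_pow_div _ _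
    _ = 4 * n ^ m * (x * k) ^ l / (l.factorial * l.factorial) := by ring
    _ ≤ 4 * n ^ m * ((n : ℝ) ^ (1 - γ)) ^ l / l.factorial := by
        gcongr
        exact le_mul_of_one_le_left (by positivity) hfac
    _ ≤ ((n : ℝ) / 4) ^ l / l.factorial := by
        gcongr
        rw [div_pow, le_div_iff₀ (by positivity), hsplit]
        calc 4 * (n : ℝ) ^ m * ((n : ℝ) ^ (1 - γ)) ^ l * 4 ^ l
            = 4 * 4 ^ l * n ^ m * ((n : ℝ) ^ (1 - γ)) ^ l := by ring
          _ ≤ _ := by gcongr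
    _ ≤ ((a + 1 - l : ℕ) : ℝ) ^ l / l.factorial := by
        gcongr
        rw [div_le_iff₀ (by norm_num)]
        exact_mod_cast (by omega : n ≤ (a + 1 - l) * 4)
    _ ≤ a.choose l := Nat.pow_le_choose l a

theorem eventually_four_mul_pow_mul_choose_mul_choose_le_choose {ζ ε : ℝ} {m l : ℕ}
    (hζ : 0 < ζ) (hm : 2 ≤ m) (hεζ : ε ≤ ζ / 24) (hl : 2 * m / ζ ≤ l) :
    ∀ᶠ n : ℕ in atTop, 4 * n ^ m * ⌊(n : ℝ) ^ (1 - ζ)⌋₊.choose l *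
      ⌊(n : ℝ) ^ (6 * ε)⌋₊.choose l ≤ (n / 2).choose l := by
  filter_upwards [eventually_ge_atTop (4 * 4 ^ l), eventually_ge_atTop (4 * l),
    eventually_ge_atTop 1] with n hn hnl hn1
  refine four_mul_pow_mul_choose_mul_choose_le_choose (γ := 3 * ζ / 4) hn ?_ ?_ (by omega)
  · have h := mul_le_mul_of_nonneg_left hl (by positivity : 0 ≤ 3 * ζ / 4)
    rw [show 3 * ζ / 4 * (2 * m / ζ) = 3 * m / 2 by field_simp; ring] at h
    have : (2 : ℝ) ≤ m := by exact_mod_cast hm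
    linarith
  · calc (⌊(n : ℝ) ^ (1 - ζ)⌋₊ * ⌊(n : ℝ) ^ (6 * ε)⌋₊ : ℝ)
        ≤ (n : ℝ) ^ (1 - ζ) * (n : ℝ) ^ (6 * ε) := by
          gcongr <;> exact Nat.floor_le (by positivity)
      _ = (n : ℝ) ^ (1 - ζ + 6 * ε) := (Real.rpow_add (by exact_mod_cast hn1) _ _).symm
      _ ≤ (n : ℝ) ^ (1 - 3 * ζ / 4) :=
          Real.rpow_le_rpow_of_exponent_le (by exact_mod_cast hn1) (by linarith)

theorem eventually_counting_bounds {ζ ε : ℝ} {m : ℕ} (hζ : 0 < ζ) (hm : 2 ≤ m) (hε : 0 < ε)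
    (hεζ : ε ≤ ζ / 24) (hε1 : ε ≤ 1 / 24) :
    ∀ᶠ n : ℕ in atTop, ⌊(n : ℝ) ^ (6 * ε)⌋₊ ≤ n / 2 ∧
      ⌈2 * (m : ℝ) / ζ⌉₊ ≤ ⌊(n : ℝ) ^ (6 * ε)⌋₊ ∧
      4 * n * ⌈(n : ℝ) ^ (3 * ε)⌉₊ ≤ 2 ^ ⌈(n : ℝ) ^ (3 * ε)⌉₊ ∧
      4 * ⌈(n : ℝ) ^ (3 * ε)⌉₊ * (n / 2) <
        (⌈(n : ℝ) ^ (1 - 2 * ε)⌉₊ - 2 * ⌈(n : ℝ) ^ (3 * ε)⌉₊) *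
          (⌊(n : ℝ) ^ (6 * ε)⌋₊ - 2 * ⌈(n : ℝ) ^ (3 * ε)⌉₊) ∧
      4 * n ^ m * ⌊(n : ℝ) ^ (1 - ζ)⌋₊.choose ⌈2 * (m : ℝ) / ζ⌉₊ *
        ⌊(n : ℝ) ^ (6 * ε)⌋₊.choose ⌈2 * (m : ℝ) / ζ⌉₊ ≤ (n / 2).choose ⌈2 * (m : ℝ) / ζ⌉₊ :=
  (eventually_floor_rpow_le_half (by linarith)).and <|
    ((eventually_le_natCast_rpow (by positivity) _).mono fun _ hn => Nat.le_floor hn).and <|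
    (eventually_four_mul_mul_ceil_rpow_le_two_pow (by positivity)).and <|
    (eventually_four_mul_ceil_mul_lt_sub_mul_sub hε hε1).and <|
    eventually_four_mul_pow_mul_choose_mul_choose_le_choose hζ hm hεζ (Nat.le_ceil _)

namespace SimpleGraph

variable {V : Type*} (G : SimpleGraph V)

theorem ncard_neighborSet_inter_coe [DecidableEq V] (v : V) [Fintype (G.neighborSet v)]
    (M : Finset V) : (G.neighborSet v ∩ ↑M).ncard = #(M ∩ G.neighborFinset v) := by
  rw [← coe_neighborFinset, ← coe_inter, Set.ncard_coe_finset, inter_comm]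

theorem coe_filter_forall_adj (A S : Finset V) [DecidablePred fun u => ∀ v ∈ S, G.Adj v u] :
    (↑{u ∈ A | ∀ v ∈ S, G.Adj v u} : Set V) = ↑A ∩ ⋂ v ∈ S, G.neighborSet v := by
  ext; simp

theorem card_filter_forall_adj_le_ncard [Finite V] (A S : Finset V)
    [DecidablePred fun u => ∀ v ∈ S, G.Adj v u] :
    #{u ∈ A | ∀ v ∈ S, G.Adj v u} ≤ (⋂ v ∈ S, G.neighborSet v).ncard := by
  rw [← Set.ncard_coe_finset, coe_filter_forall_adj]
  exact Set.ncard_le_ncard Set.inter_subset_right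

theorem ncard_iInter_neighborSet_inter_coe [DecidableEq V] {A M : Finset V} (hMA : M ⊆ A)
    (S : Finset V) [DecidablePred fun u => ∀ v ∈ S, G.Adj v u] :
    ((⋂ v ∈ S, G.neighborSet v) ∩ ↑M).ncard = #(M ∩ {u ∈ A | ∀ v ∈ S, G.Adj v u}) := by
  rw [← Set.ncard_coe_finset, coe_inter, coe_filter_forall_adj, ← Set.inter_assoc,
    Set.inter_eq_left.2 (coe_subset.2 hMA), Set.inter_comm]

end SimpleGraph

theorem stmt7_general (ζ : ℝ) (hζ0 : 0 < ζ) (m : ℕ) (hm : 2 ≤ m) :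
    ∃ ε₀ : ℝ, 0 < ε₀ ∧ ∀ ε : ℝ, 0 < ε → ε ≤ ε₀ →
      ∃ n₀ : ℕ, ∀ n : ℕ, n₀ ≤ n →
        ∀ (G' : SimpleGraph (Fin n)) (A B : Finset (Fin n)),
          Disjoint A B → A ∪ B = Finset.univ →
          A.card = n / 2 → B.card = n - n / 2 →
          (∀ u v : Fin n, G'.Adj u v → (u ∈ A ∧ v ∈ B) ∨ (u ∈ B ∧ v ∈ A)) →
          (∀ v : Fin n, (n : ℝ) ^ (1 - 2 * ε) ≤ ((G'.neighborSet v).ncard : ℝ)) →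
          ∃ M : Finset (Fin n), M ⊆ A ∧ M.card = ⌊(n : ℝ) ^ (6 * ε)⌋₊ ∧
            (∀ v ∈ B, (n : ℝ) ^ (3 * ε) ≤ (((G'.neighborSet v) ∩ ↑M).ncard : ℝ)) ∧
            ¬ ∃ S : Finset (Fin n), S ⊆ B ∧ S.card = m ∧
                (((⋂ v ∈ S, G'.neighborSet v)).ncard : ℝ) ≤ (n : ℝ) ^ (1 - ζ) ∧
                (⌈2 * (m : ℝ) / ζ⌉₊ : ℝ) ≤ ((((⋂ v ∈ S, G'.neighborSet v) ∩ ↑M)).ncard : ℝ) := by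
  classical
  refine ⟨min (ζ / 24) (1 / 24), by positivity, fun ε hε hεle => ?_⟩
  obtain ⟨n₀, hn₀⟩ := eventually_atTop.1 <| eventually_counting_bounds hζ0 hm hε
    (hεle.trans (min_le_left _ _)) (hεle.trans (min_le_right _ _))
  refine ⟨n₀, fun n hn G' A B hAB _ hA _ hbip hdeg => ?_⟩
  obtain ⟨hkA, hlk, hBt, htA, h𝒮⟩ := hn₀ n hn
  have hNA : ∀ v ∈ B, G'.neighborFinset v ⊆ A := fun v hv u hu =>
    ((hbip v u ((G'.mem_neighborFinset v u).1 hu)).resolve_left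
      fun h => disjoint_left.1 hAB h.1 hv).2
  have hdeg' : ∀ v, ⌈(n : ℝ) ^ (1 - 2 * ε)⌉₊ ≤ #(G'.neighborFinset v) := fun v =>
    Nat.ceil_le.2 <| by rw [← Set.ncard_coe_finset, SimpleGraph.coe_neighborFinset]; exact hdeg v
  have hBn : #B ≤ n := by simpa using card_le_univ B
  have h𝒮card : #{S ∈ B.powersetCard m | #{u ∈ A | ∀ v ∈ S, G'.Adj v u} ≤ ⌊(n : ℝ) ^ (1 - ζ)⌋₊}
      ≤ n ^ m :=
    (card_filter_le _ _).trans <| (card_powersetCard _ _).trans_le <|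
      (Nat.choose_le_pow _ _).trans (Nat.pow_le_pow_left hBn m)
  obtain ⟨M, hM, hMN, hMX⟩ := exists_mem_powersetCard_forall_le_card_inter_and_forall_card_inter_lt
    (D := fun v => G'.neighborFinset v) hNA (fun v _ => hdeg' v)
    (fun S _ => filter_subset _ _) (fun S hS => (mem_filter.1 hS).2) (hA ▸ hkA) hlk
    (le_trans (by gcongr) hBt) (hA ▸ htA) (hA ▸ le_trans (by gcongr) h𝒮)
  obtain ⟨hMA, hMk⟩ := mem_powersetCard.1 hM
  refine ⟨M, hMA, hMk, fun v hv => ?_, ?_⟩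
  · rw [G'.ncard_neighborSet_inter_coe]
    exact (Nat.le_ceil _).trans (by exact_mod_cast hMN v hv)
  · rintro ⟨S, hSB, hSm, hsmall, hbig⟩
    rw [G'.ncard_iInter_neighborSet_inter_coe hMA] at hbig
    have hx := Nat.le_floor <| (Nat.cast_le.2 (G'.card_filter_forall_adj_le_ncard A S)).trans hsmall
    exact (hMX S (mem_filter.2 ⟨mem_powersetCard.2 ⟨hSB, hSm⟩, hx⟩)).not_ge (by exact_mod_cast hbig)

theorem stmt7 (ζ : ℝ) (hζ0 : 0 < ζ) (hζ1 : ζ < 1 / 2) (m : ℕ) (hm : 2 ≤ m) :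
    ∃ ε₀ : ℝ, 0 < ε₀ ∧ ∀ ε : ℝ, 0 < ε → ε ≤ ε₀ →
      ∃ n₀ : ℕ, ∀ n : ℕ, n₀ ≤ n →
        ∀ (G' : SimpleGraph (Fin n)) (A B : Finset (Fin n)),
          Disjoint A B → A ∪ B = Finset.univ →
          A.card = n / 2 → B.card = n - n / 2 →
          (∀ u v : Fin n, G'.Adj u v → (u ∈ A ∧ v ∈ B) ∨ (u ∈ B ∧ v ∈ A)) →
          (∀ v : Fin n, (n : ℝ) ^ (1 - 2 * ε) ≤ ((G'.neighborSet v).ncard : ℝ)) →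
          ∃ M : Finset (Fin n), M ⊆ A ∧ M.card = ⌊(n : ℝ) ^ (6 * ε)⌋₊ ∧
            (∀ v ∈ B, (n : ℝ) ^ (3 * ε) ≤ (((G'.neighborSet v) ∩ ↑M).ncard : ℝ)) ∧
            ¬ ∃ S : Finset (Fin n), S ⊆ B ∧ S.card = m ∧
                (((⋂ v ∈ S, G'.neighborSet v)).ncard : ℝ) ≤ (n : ℝ) ^ (1 - ζ) ∧
                (⌈2 * (m : ℝ) / ζ⌉₊ : ℝ) ≤ ((((⋂ v ∈ S, G'.neighborSet v) ∩ ↑M)).ncard : ℝ) :=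
  stmt7_general ζ hζ0 m hm
end

section
/- For every real ζ with 0 < ζ < 1/2 and every integer m ≥ 2, setting ℓ := ⌈2m/ζ⌉, there exist ε₀ > 0 and, for each ε ∈ (0, ε₀], an n₀ ∈ ℕ such that the following holds for all n ≥ n₀. Let G' be a bipartite graph with parts A and B satisfying |A| = ⌊n/2⌋ and |B| = n − ⌊n/2⌋, in which every vertex has degree at least n^{1−2ε}. Then for every set T ⊆ A with |T| = ⌊n^{3ε}⌋ there exists a set R ⊆ B with |R| = ⌊n^{1−ζ²}⌋ such that |⋂_{v∈R} N_{G'}(v) ∩ T| ≥ ℓ. -/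
private lemma ev_rpow_ge (c a : ℝ) (hc : 0 < c) :
    ∀ᶠ n : ℕ in Filter.atTop, a ≤ (n : ℝ) ^ c := by
  have h := (tendsto_rpow_atTop hc).comp tendsto_natCast_atTop_atTop
  exact h.eventually_ge_atTop a

private lemma double_count1 {α : Type*} [DecidableEq α] (B : Finset α)
    (X : Finset (Finset α)) (N : α → Finset α) :
    ∑ v ∈ B, ((X.filter (fun S => S ⊆ N v)).card)
      = ∑ S ∈ X, ((B.filter (fun v => S ⊆ N v)).card) := by
  simp only [Finset.card_filter]
  exact Finset.sum_comm

private lemma double_count2 {α : Type*} [DecidableEq α] (B T : Finset α) (N : α → Finset α) :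
    ∑ v ∈ B, (N v ∩ T).card = ∑ x ∈ T, ((B.filter (fun v => x ∈ N v)).card) := by
  have h : ∀ v, (N v ∩ T).card = ((T.filter (fun x => x ∈ N v)).card) := by
    intro v
    rw [Finset.inter_comm, ← Finset.filter_mem_eq_inter]
  simp only [h, Finset.card_filter]
  exact Finset.sum_comm

private lemma choose_eq_filter_card {α : Type*} [DecidableEq α] (T Nv : Finset α) (L : ℕ) :
    (Nv ∩ T).card.choose L = ((T.powersetCard L).filter (fun S => S ⊆ Nv)).card := by
  rw [← Finset.card_powersetCard]
  congr 1
  ext S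
  simp only [Finset.mem_powersetCard, Finset.mem_filter, Finset.subset_inter_iff]
  tauto

set_option maxHeartbeats 1000000 in
theorem stmt8 (ζ : ℝ) (hζ0 : 0 < ζ) (hζ1 : ζ < 1 / 2) (m : ℕ) (hm : 2 ≤ m) :
    ∃ ε₀ : ℝ, 0 < ε₀ ∧ ∀ ε : ℝ, 0 < ε → ε ≤ ε₀ →
      ∃ n₀ : ℕ, ∀ n : ℕ, n₀ ≤ n →
        ∀ (G' : SimpleGraph (Fin n)) (A B : Finset (Fin n)),
          Disjoint A B → A ∪ B = Finset.univ →
          A.card = n / 2 → B.card = n - n / 2 →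
          (∀ u v : Fin n, G'.Adj u v → (u ∈ A ∧ v ∈ B) ∨ (u ∈ B ∧ v ∈ A)) →
          (∀ v : Fin n, (n : ℝ) ^ (1 - 2 * ε) ≤ ((G'.neighborSet v).ncard : ℝ)) →
          ∀ T : Finset (Fin n), T ⊆ A → T.card = ⌊(n : ℝ) ^ (3 * ε)⌋₊ →
            ∃ R : Finset (Fin n), R ⊆ B ∧ R.card = ⌊(n : ℝ) ^ (1 - ζ ^ 2)⌋₊ ∧
              (⌈2 * (m : ℝ) / ζ⌉₊ : ℝ) ≤ ((((⋂ v ∈ R, G'.neighborSet v) ∩ ↑T)).ncard : ℝ) := by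
  have hζ2 : (0:ℝ) < ζ ^ 2 := by positivity
  set L : ℕ := ⌈2 * (m : ℝ) / ζ⌉₊ with hLdef
  refine ⟨ζ ^ 2 / (8 * ((L : ℝ) + 1)), by positivity, ?_⟩
  intro ε hε hεle
  have hev := ((ev_rpow_ge (3*ε) 2 (by positivity)).and
    ((ev_rpow_ge ε (16*((L:ℝ)+1)) hε).and
      (ev_rpow_ge (3*ζ^2/4) (4 * 16 ^ L * (L.factorial : ℝ) + 1) (by positivity)))).and
    (Filter.eventually_ge_atTop 1)
  obtain ⟨n₀, hn₀⟩ := Filter.eventually_atTop.mp hev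
  refine ⟨n₀, ?_⟩
  intro n hn G' A B hdisj hun hAcard hBcard hbip hdeg T hTA hTcard
  obtain ⟨⟨h2, hL16, hC⟩, hn1⟩ := hn₀ n hn
  have hn0 : (0:ℝ) < (n:ℝ) := by exact_mod_cast hn1
  have hn1' : (1:ℝ) ≤ (n:ℝ) := by exact_mod_cast hn1
  have hE : ∀ a b : ℝ, (n:ℝ) ^ a * (n:ℝ) ^ b = (n:ℝ) ^ (a + b) :=
    fun a b => (Real.rpow_add hn0 a b).symm
  set r : ℕ := ⌊(n:ℝ) ^ (1 - ζ ^ 2)⌋₊ with hrdef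
  let Nf : Fin n → Finset (Fin n) := fun v => (G'.neighborSet v).toFinite.toFinset
  have hNf : ∀ v x, x ∈ Nf v ↔ G'.Adj v x := by
    intro v x
    simp [Nf, Set.Finite.mem_toFinset]
  have hNfcard : ∀ v, ((Nf v).card : ℝ) = ((G'.neighborSet v).ncard : ℝ) := by
    intro v
    rw [Set.ncard_eq_toFinset_card _ (G'.neighborSet v).toFinite]
  set Dn : ℕ := ⌊(n:ℝ) ^ ε / 4⌋₊ with hDdef
  -- Step 1 : double counting identity
  have hident : ∑ v ∈ B, ((Nf v ∩ T).card).choose L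
      = ∑ S ∈ T.powersetCard L, ((B.filter (fun v => S ⊆ Nf v)).card) := by
    rw [← double_count1]
    exact Finset.sum_congr rfl fun v _ => choose_eq_filter_card T (Nf v) L
  -- Step 2 : lower bound on total degree into T
  have hBfil : ∀ x ∈ T, B.filter (fun v => x ∈ Nf v) = Nf x := by
    intro x hx
    ext v
    simp only [Finset.mem_filter, hNf]
    constructor
    · rintro ⟨-, h⟩
      exact h.symm
    · intro h
      refine ⟨?_, h.symm⟩
      rcases hbip x v h with ⟨hxA, hvB⟩ | ⟨hxB, hvA⟩
      · exact hvB
      · exact absurd hxB (Finset.disjoint_left.mp hdisj (hTA hx))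
  have hsum1 : ∑ v ∈ B, (Nf v ∩ T).card = ∑ x ∈ T, (Nf x).card := by
    rw [double_count2]
    exact Finset.sum_congr rfl fun x hx => by rw [hBfil x hx]
  have hsumR : (T.card : ℝ) * (n:ℝ) ^ (1 - 2*ε) ≤ ∑ v ∈ B, (((Nf v ∩ T).card : ℕ) : ℝ) := by
    have e2 : (∑ v ∈ B, (((Nf v ∩ T).card : ℕ) : ℝ)) = ∑ x ∈ T, (((Nf x).card : ℕ) : ℝ) := by
      exact_mod_cast hsum1
    have e1 : (∑ _x ∈ T, (n:ℝ) ^ (1 - 2*ε)) = (T.card : ℝ) * (n:ℝ) ^ (1 - 2*ε) := by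
      rw [Finset.sum_const, nsmul_eq_mul]
    rw [e2, ← e1]
    refine Finset.sum_le_sum fun x _ => ?_
    rw [hNfcard]
    exact hdeg x
  -- floor bounds for T.card
  have htle : (T.card : ℝ) ≤ (n:ℝ) ^ (3*ε) := by
    rw [hTcard]; exact Nat.floor_le (by positivity)
  have htge : (n:ℝ) ^ (3*ε) / 2 ≤ (T.card : ℝ) := by
    rw [hTcard]
    have h := Nat.sub_one_lt_floor ((n:ℝ) ^ (3*ε))
    linarith
  -- Step 3 : many vertices of B with large degree into T
  set B' : Finset (Fin n) := B.filter (fun v => Dn ≤ (Nf v ∩ T).card) with hB'def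
  have hDle : (Dn : ℝ) ≤ (n:ℝ) ^ ε / 4 := Nat.floor_le (by positivity)
  have hDge : (n:ℝ) ^ ε / 4 - 1 < (Dn : ℝ) := Nat.sub_one_lt_floor _
  have hsmall : ∑ v ∈ B.filter (fun v => ¬ Dn ≤ (Nf v ∩ T).card), (((Nf v ∩ T).card : ℕ) : ℝ)
      ≤ (n:ℝ) * ((n:ℝ) ^ ε / 4) := by
    have hcard : ((B.filter (fun v => ¬ Dn ≤ (Nf v ∩ T).card)).card : ℝ) ≤ (n:ℝ) := by
      have h := Finset.card_le_univ (B.filter (fun v => ¬ Dn ≤ (Nf v ∩ T).card))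
      have h' : Fintype.card (Fin n) = n := by simp
      rw [h'] at h
      exact_mod_cast h
    calc ∑ v ∈ B.filter (fun v => ¬ Dn ≤ (Nf v ∩ T).card), (((Nf v ∩ T).card : ℕ) : ℝ)
        ≤ ∑ _v ∈ B.filter (fun v => ¬ Dn ≤ (Nf v ∩ T).card), ((n:ℝ) ^ ε / 4) := by
          refine Finset.sum_le_sum fun v hv => ?_
          have hv' := (Finset.mem_filter.mp hv).2
          push_neg at hv'
          have hlt : (((Nf v ∩ T).card : ℕ) : ℝ) < (Dn : ℝ) := by exact_mod_cast hv'
          linarith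
      _ = ((B.filter (fun v => ¬ Dn ≤ (Nf v ∩ T).card)).card : ℝ) * ((n:ℝ) ^ ε / 4) := by
          rw [Finset.sum_const, nsmul_eq_mul]
      _ ≤ (n:ℝ) * ((n:ℝ) ^ ε / 4) :=
          mul_le_mul_of_nonneg_right hcard (by positivity)
  have hid1 : (n:ℝ) ^ (3*ε) * (n:ℝ) ^ (1 - 2*ε) = (n:ℝ) ^ (1 + ε) := by
    rw [hE]; congr 1; ring
  have hid2 : (n:ℝ) * ((n:ℝ) ^ ε / 4) = (n:ℝ) ^ (1 + ε) / 4 := by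
    rw [Real.rpow_add hn0, Real.rpow_one]; ring
  have hB'sum : (n:ℝ) ^ (1 + ε) / 4 ≤ ∑ v ∈ B', (((Nf v ∩ T).card : ℕ) : ℝ) := by
    have hsplit : ∑ v ∈ B', (((Nf v ∩ T).card : ℕ) : ℝ)
        + ∑ v ∈ B.filter (fun v => ¬ Dn ≤ (Nf v ∩ T).card), (((Nf v ∩ T).card : ℕ) : ℝ)
        = ∑ v ∈ B, (((Nf v ∩ T).card : ℕ) : ℝ) :=
      Finset.sum_filter_add_sum_filter_not B _ _
    have htot : (n:ℝ) ^ (1 + ε) / 2 ≤ ∑ v ∈ B, (((Nf v ∩ T).card : ℕ) : ℝ) := by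
      have h := mul_le_mul_of_nonneg_right htge
        (le_of_lt (Real.rpow_pos_of_pos hn0 (1 - 2*ε)))
      calc (n:ℝ) ^ (1 + ε) / 2 = (n:ℝ) ^ (3*ε) / 2 * (n:ℝ) ^ (1 - 2*ε) := by
            rw [div_mul_eq_mul_div, hid1]
        _ ≤ (T.card : ℝ) * (n:ℝ) ^ (1 - 2*ε) := h
        _ ≤ ∑ v ∈ B, (((Nf v ∩ T).card : ℕ) : ℝ) := hsumR
    rw [hid2] at hsmall
    linarith
  have hB'card : (n:ℝ) ^ (1 + ε) / 4 ≤ (B'.card : ℝ) * (n:ℝ) ^ (3*ε) := by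
    have h1 : ∑ v ∈ B', (((Nf v ∩ T).card : ℕ) : ℝ) ≤ (B'.card : ℝ) * (n:ℝ) ^ (3*ε) := by
      calc ∑ v ∈ B', (((Nf v ∩ T).card : ℕ) : ℝ) ≤ ∑ _v ∈ B', (n:ℝ) ^ (3*ε) := by
            refine Finset.sum_le_sum fun v _ => ?_
            have hdt : (Nf v ∩ T).card ≤ T.card := Finset.card_le_card Finset.inter_subset_right
            have hdt' : (((Nf v ∩ T).card : ℕ) : ℝ) ≤ (T.card : ℝ) := by exact_mod_cast hdt
            linarith [htle]
        _ = (B'.card : ℝ) * (n:ℝ) ^ (3*ε) := by rw [Finset.sum_const, nsmul_eq_mul]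
    linarith
  -- Step 4 : lower bound for W
  have hLDn : L ≤ Dn + 1 := by
    have h1 : (L : ℝ) ≤ (Dn : ℝ) := by nlinarith [hL16, hDge]
    have h2 : L ≤ Dn := by exact_mod_cast h1
    omega
  have hDnL : (n:ℝ) ^ ε / 16 ≤ ((Dn + 1 - L : ℕ) : ℝ) := by
    have hcast : ((Dn + 1 - L : ℕ) : ℝ) = (Dn : ℝ) + 1 - (L : ℝ) := by
      push_cast [Nat.cast_sub hLDn]
      ring
    rw [hcast]
    nlinarith [hL16, hDge]
  have hWlb : (B'.card : ℝ) * (((n:ℝ) ^ ε / 16) ^ L / (L.factorial : ℝ))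
      ≤ ((∑ v ∈ B, ((Nf v ∩ T).card).choose L : ℕ) : ℝ) := by
    have hnat : B'.card * Dn.choose L ≤ ∑ v ∈ B, ((Nf v ∩ T).card).choose L := by
      calc B'.card * Dn.choose L = ∑ _v ∈ B', Dn.choose L := by
            rw [Finset.sum_const, smul_eq_mul]
        _ ≤ ∑ v ∈ B', ((Nf v ∩ T).card).choose L :=
            Finset.sum_le_sum fun v hv => Nat.choose_le_choose L (Finset.mem_filter.mp hv).2
        _ ≤ ∑ v ∈ B, ((Nf v ∩ T).card).choose L :=
            Finset.sum_le_sum_of_subset (Finset.filter_subset _ _)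
    have hchoose : ((n:ℝ) ^ ε / 16) ^ L / (L.factorial : ℝ) ≤ (Dn.choose L : ℝ) := by
      refine le_trans ?_ (Nat.pow_le_choose L Dn)
      have hfacpos : (0:ℝ) < (L.factorial : ℝ) := by exact_mod_cast L.factorial_pos
      have hb : ((n:ℝ) ^ ε / 16) ^ L ≤ (((Dn + 1 - L : ℕ) : ℝ)) ^ L :=
        pow_le_pow_left₀ (by positivity) hDnL L
      exact (div_le_div_iff_of_pos_right hfacpos).mpr hb
    calc (B'.card : ℝ) * (((n:ℝ) ^ ε / 16) ^ L / (L.factorial : ℝ))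
        ≤ (B'.card : ℝ) * (Dn.choose L : ℝ) :=
          mul_le_mul_of_nonneg_left hchoose (by positivity)
      _ ≤ _ := by exact_mod_cast hnat
  -- rpow power identities
  have hp : ((n:ℝ) ^ ε) ^ L = (n:ℝ) ^ (ε * L) := by
    rw [← Real.rpow_natCast ((n:ℝ) ^ ε) L, ← Real.rpow_mul hn0.le]
  have hp3 : ((n:ℝ) ^ (3*ε)) ^ L = (n:ℝ) ^ (3*ε * L) := by
    rw [← Real.rpow_natCast ((n:ℝ) ^ (3*ε)) L, ← Real.rpow_mul hn0.le]
  have hfacpos : (0:ℝ) < (L.factorial : ℝ) := by exact_mod_cast L.factorial_pos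
  have hC₀pos : (0:ℝ) < 4 * 16 ^ L * (L.factorial : ℝ) := by positivity
  -- W * n^{3ε} bounded below
  have hW2' : (n:ℝ) ^ (1 + ε) * (n:ℝ) ^ (ε * L)
      ≤ (4 * 16 ^ L * (L.factorial : ℝ))
        * (((∑ v ∈ B, ((Nf v ∩ T).card).choose L : ℕ) : ℝ) * (n:ℝ) ^ (3*ε)) := by
    have h4 : (n:ℝ) ^ (1 + ε) * (n:ℝ) ^ (ε * L)
        ≤ ((B'.card : ℝ) * (n:ℝ) ^ (3*ε)) * (4 * (n:ℝ) ^ (ε * L)) := by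
      calc (n:ℝ) ^ (1 + ε) * (n:ℝ) ^ (ε * L)
          = ((n:ℝ) ^ (1 + ε) / 4) * (4 * (n:ℝ) ^ (ε * L)) := by ring
        _ ≤ ((B'.card : ℝ) * (n:ℝ) ^ (3*ε)) * (4 * (n:ℝ) ^ (ε * L)) :=
            mul_le_mul_of_nonneg_right hB'card (by positivity)
    have h6 : ((B'.card : ℝ) * (n:ℝ) ^ (3*ε)) * (4 * (n:ℝ) ^ (ε * L))
        = (4 * 16 ^ L * (L.factorial : ℝ))
          * (((B'.card : ℝ) * (((n:ℝ) ^ ε / 16) ^ L / (L.factorial : ℝ))) * (n:ℝ) ^ (3*ε)) := by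
      rw [div_pow, hp]
      field_simp
    rw [h6] at h4
    refine le_trans h4 ?_
    have h7 := mul_le_mul_of_nonneg_right hWlb
      (le_of_lt (Real.rpow_pos_of_pos hn0 (3*ε)))
    exact mul_le_mul_of_nonneg_left h7 hC₀pos.le
  -- main exponent comparison
  have hmain : (4 * 16 ^ L * (L.factorial : ℝ))
        * ((n:ℝ) ^ (3*ε*L) * (n:ℝ) ^ (1 - ζ^2) * (n:ℝ) ^ (3*ε))
      < (n:ℝ) ^ (1 + ε) * (n:ℝ) ^ (ε * L) := by
    have hCn : 4 * 16 ^ L * (L.factorial : ℝ) < (n:ℝ) ^ (3*ζ^2/4) := by linarith [hC]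
    have hexp : (3*ζ^2/4 : ℝ) ≤ ζ^2 - 2*ε - 2*(ε*L) := by
      have hL0 : (0:ℝ) ≤ (L : ℝ) := Nat.cast_nonneg L
      have h8 : (0:ℝ) < 8 * ((L:ℝ) + 1) := by positivity
      have h9 : ε * (8 * ((L:ℝ) + 1)) ≤ ζ^2 := by
        rw [div_eq_mul_inv] at hεle
        calc ε * (8 * ((L:ℝ) + 1)) ≤ (ζ^2 * (8 * ((L:ℝ) + 1))⁻¹) * (8 * ((L:ℝ) + 1)) := by
              exact mul_le_mul_of_nonneg_right hεle h8.le
          _ = ζ^2 := by field_simp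
      nlinarith [hL0, hε.le]
    have hCn2 : 4 * 16 ^ L * (L.factorial : ℝ) < (n:ℝ) ^ (ζ^2 - 2*ε - 2*(ε*L)) :=
      lt_of_lt_of_le hCn (Real.rpow_le_rpow_of_exponent_le hn1' hexp)
    calc (4 * 16 ^ L * (L.factorial : ℝ))
          * ((n:ℝ) ^ (3*ε*L) * (n:ℝ) ^ (1 - ζ^2) * (n:ℝ) ^ (3*ε))
        < (n:ℝ) ^ (ζ^2 - 2*ε - 2*(ε*L))
          * ((n:ℝ) ^ (3*ε*L) * (n:ℝ) ^ (1 - ζ^2) * (n:ℝ) ^ (3*ε)) :=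
          mul_lt_mul_of_pos_right hCn2 (by positivity)
      _ = (n:ℝ) ^ (1 + ε) * (n:ℝ) ^ (ε * L) := by
          rw [hE, hE, hE, hE]
          congr 1
          ring
  -- upper bound for trivial count
  have hup : ((T.card : ℝ) ^ L * (r : ℝ)) * (n:ℝ) ^ (3*ε)
      ≤ (n:ℝ) ^ (3*ε*L) * (n:ℝ) ^ (1 - ζ^2) * (n:ℝ) ^ (3*ε) := by
    have h1 : (T.card : ℝ) ^ L ≤ (n:ℝ) ^ (3*ε*L) := by
      rw [← hp3]
      exact pow_le_pow_left₀ (Nat.cast_nonneg _) htle L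
    have h2' : (r : ℝ) ≤ (n:ℝ) ^ (1 - ζ^2) := by
      rw [hrdef]; exact Nat.floor_le (by positivity)
    have h3 := mul_le_mul h1 h2' (Nat.cast_nonneg r) (by positivity)
    exact mul_le_mul_of_nonneg_right h3 (by positivity)
  -- combine : T.card^L * r < W
  have hWgt : (T.card : ℝ) ^ L * (r : ℝ) < ((∑ v ∈ B, ((Nf v ∩ T).card).choose L : ℕ) : ℝ) := by
    have hchain : (4 * 16 ^ L * (L.factorial : ℝ)) * (((T.card : ℝ) ^ L * (r : ℝ)) * (n:ℝ) ^ (3*ε))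
        < (4 * 16 ^ L * (L.factorial : ℝ))
          * (((∑ v ∈ B, ((Nf v ∩ T).card).choose L : ℕ) : ℝ) * (n:ℝ) ^ (3*ε)) := by
      calc (4 * 16 ^ L * (L.factorial : ℝ)) * (((T.card : ℝ) ^ L * (r : ℝ)) * (n:ℝ) ^ (3*ε))
          ≤ (4 * 16 ^ L * (L.factorial : ℝ))
            * ((n:ℝ) ^ (3*ε*L) * (n:ℝ) ^ (1 - ζ^2) * (n:ℝ) ^ (3*ε)) :=
            mul_le_mul_of_nonneg_left hup hC₀pos.le
        _ < (n:ℝ) ^ (1 + ε) * (n:ℝ) ^ (ε * L) := hmain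
        _ ≤ _ := hW2'
    have h1 := lt_of_mul_lt_mul_left hchain hC₀pos.le
    exact lt_of_mul_lt_mul_right h1 (le_of_lt (Real.rpow_pos_of_pos hn0 (3*ε)))
  have hnat : T.card ^ L * r < ∑ v ∈ B, ((Nf v ∩ T).card).choose L := by exact_mod_cast hWgt
  -- Step 5 : pigeonhole
  have hpig : ∑ _S ∈ T.powersetCard L, (r - 1)
      < ∑ S ∈ T.powersetCard L, ((B.filter (fun v => S ⊆ Nf v)).card) := by
    rw [← hident, Finset.sum_const, smul_eq_mul]
    refine lt_of_le_of_lt ?_ hnat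
    have hX : (T.powersetCard L).card ≤ T.card ^ L := by
      rw [Finset.card_powersetCard]
      exact Nat.choose_le_pow _ _
    exact Nat.mul_le_mul hX (Nat.sub_le r 1)
  obtain ⟨S, hSX, hS⟩ := Finset.exists_lt_of_sum_lt hpig
  have hrf : r ≤ (B.filter (fun v => S ⊆ Nf v)).card := by omega
  obtain ⟨R, hRf, hRcard⟩ := Finset.exists_subset_card_eq hrf
  refine ⟨R, hRf.trans (Finset.filter_subset _ _), hRcard, ?_⟩
  obtain ⟨hST, hScard⟩ := Finset.mem_powersetCard.mp hSX
  have hsub : (↑S : Set (Fin n)) ⊆ (⋂ v ∈ R, G'.neighborSet v) ∩ ↑T := by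
    intro x hx
    rw [Finset.mem_coe] at hx
    simp only [Set.mem_inter_iff, Set.mem_iInter, SimpleGraph.mem_neighborSet]
    refine ⟨fun v hv => ?_, Finset.mem_coe.mpr (hST hx)⟩
    have hmem := Finset.mem_filter.mp (hRf hv)
    exact (hNf v x).mp (hmem.2 hx)
  have hfin := Set.ncard_le_ncard hsub (Set.toFinite _)
  rw [Set.ncard_coe_finset, hScard] at hfin
  exact_mod_cast hfin
end

section
/- For all reals η and ζ with 0 < ζ ≤ η/2 < 1/4 there exists n₀ ∈ ℕ such that the following holds for all n ≥ n₀. Let G be an n-vertex graph, and suppose there exist sets T ⊆ S ⊆ V(G) with |S| ≥ |T| ≥ n^{1−η} such that any two distinct vertices u, v ∈ S satisfy |N_G(u) ∩ N_G(v)| ≥ n^{1−ζ} + 1. Then there exists a subgraph G' ⊆ G with the following properties: (i) d_{G'}(v) ≥ n^{1−2ζ} for every v ∈ S; (ii) |M_{G,ζ}(e) ∩ T| ≥ n^{1−2η} for every edge e ∈ E(G'). -/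
/-- The edges `xy` and `zw` (with `{x,y}` and `{z,w}` disjoint) "form a `C₄`" via the
connecting edges `yz, wx` or `yw, zx`. -/
def FormC4With {V : Type*} (G : SimpleGraph V) (x y z w : V) : Prop :=
  (G.Adj y z ∧ G.Adj w x) ∨ (G.Adj y w ∧ G.Adj z x)

/-- `M_{G,ζ}(xy)`: the set of vertices `z ∉ {x,y}` having at least `n^(1-ζ)` neighbours
`w ∉ {x,y}` such that the edges `xy` and `zw` form a `C₄` in `G`. -/
def Mpair {V : Type*} (ζ : ℝ) (n : ℕ) (G : SimpleGraph V) (x y : V) : Set V :=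
  {z : V | z ≠ x ∧ z ≠ y ∧
    (n : ℝ) ^ (1 - ζ) ≤
      (({w : V | w ≠ x ∧ w ≠ y ∧ G.Adj z w ∧ FormC4With G x y z w} : Set V).ncard : ℝ)}

/-- `M_{G,ζ}(e)` for an edge `e` given as an unordered pair. -/
def Medge {V : Type*} (ζ : ℝ) (n : ℕ) (G : SimpleGraph V) (e : Sym2 V) : Set V :=
  {z : V | ∃ x y : V, e = s(x, y) ∧ z ∈ Mpair ζ n G x y}

/-!
Keep an edge `uw` of `G` with `u ∈ S` exactly when `w` has more than `n^(1-2η)` neighbours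
in `T`. Each such neighbour `z ≠ u` lies in `M(uw)`: every common neighbour `w' ≠ w` of `z`
and `u` closes the `C₄` `u w z w'`, and there are more than `n^(1-ζ)` of them. For the degree
bound, double count the paths `v – w – z` with `z ∈ T`: there are at least
`(|T| - 1)(n^(1-ζ) + 1)` of them, while the neighbours `w` of `v` with few neighbours in `T`
account for at most `n · (n^(1-2η) + 1)`. As `|T| ≥ n^(1-η)`, the remaining neighbours carry
almost all paths, so there are at least `n^(1-2ζ)` of them.
-/

open Finset Filter

theorem Finset.sum_le_card_filter_mul_add {ι : Type*} (s : Finset ι) (f : ι → ℝ) {M θ : ℝ}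
    (hθ : 0 ≤ θ) (hM : ∀ x ∈ s, f x ≤ M) :
    ∑ x ∈ s, f x ≤ #{x ∈ s | θ ≤ f x} * M + #s * θ := by
  rw [← sum_filter_add_sum_filter_not s (θ ≤ f ·)]
  refine add_le_add ?_ ?_
  · simpa using sum_le_card_nsmul _ f M fun x hx => hM x (mem_filter.mp hx).1
  · calc ∑ x ∈ s with ¬θ ≤ f x, f x
        ≤ #{x ∈ s | ¬θ ≤ f x} * θ := by
          simpa using sum_le_card_nsmul _ f θ fun x hx => (not_le.mp (mem_filter.mp hx).2).le
      _ ≤ #s * θ := by gcongr; exact filter_subset _ _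

theorem Set.ncard_le_ncard_add_one_of_sdiff_singleton_subset {α : Type*} {s t : Set α} {a : α}
    (h : s \ {a} ⊆ t) (ht : t.Finite := by toFinite_tac) : s.ncard ≤ t.ncard + 1 :=
  Nat.sub_le_iff_le_add.mp ((pred_ncard_le_ncard_sdiff_singleton s a).trans (ncard_le_ncard h ht))

theorem eventually_const_mul_rpow_le_rpow (c : ℝ) {a b : ℝ} (hab : a < b) :
    ∀ᶠ n : ℕ in atTop, c * (n : ℝ) ^ a ≤ (n : ℝ) ^ b := by
  have hlim : Tendsto (fun n : ℕ => (n : ℝ) ^ (b - a)) atTop atTop :=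
    (tendsto_rpow_atTop (by linarith)).comp tendsto_natCast_atTop_atTop
  filter_upwards [hlim.eventually_ge_atTop c, eventually_ge_atTop 1] with n hc hn
  have hn0 : (0 : ℝ) < n := by exact_mod_cast hn
  calc c * (n : ℝ) ^ a ≤ (n : ℝ) ^ (b - a) * (n : ℝ) ^ a := by gcongr
    _ = (n : ℝ) ^ b := by rw [← Real.rpow_add hn0, sub_add_cancel]

theorem eventually_rpow_le_of_sub_one_mul_le {η ζ : ℝ} (hζ : 0 < ζ) (hζη : ζ < η)
    (hηζ : η + ζ < 1) :
    ∀ᶠ n : ℕ in atTop, ∀ t D : ℝ, (n : ℝ) ^ (1 - η) ≤ t →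
      (t - 1) * ((n : ℝ) ^ (1 - ζ) + 1) ≤ D * t + n * ((n : ℝ) ^ (1 - 2 * η) + 1) →
      (n : ℝ) ^ (1 - 2 * ζ) ≤ D := by
  filter_upwards [eventually_const_mul_rpow_le_rpow 4 (a := 2 - η - 2 * ζ) (b := 2 - η - ζ)
      (by linarith), eventually_const_mul_rpow_le_rpow 4 (a := 1 - ζ) (b := 2 - η - ζ)
      (by linarith), eventually_const_mul_rpow_le_rpow 4 (a := 2 - 2 * η) (b := 2 - η - ζ)
      (by linarith), eventually_const_mul_rpow_le_rpow 4 (a := 1) (b := 2 - η - ζ)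
      (by linarith), eventually_ge_atTop 1] with n h₁ h₂ h₃ h₄ hn t D ht hpaths
  have hn1 : (1 : ℝ) ≤ n := by exact_mod_cast hn
  have hn0 : (0 : ℝ) < n := by linarith
  have ht1 : 1 ≤ t := (Real.one_le_rpow hn1 (by linarith)).trans ht
  have hgap : (n : ℝ) ^ (1 - η) * ((n : ℝ) ^ (1 - ζ) - (n : ℝ) ^ (1 - 2 * ζ))
      ≤ t * ((n : ℝ) ^ (1 - ζ) - (n : ℝ) ^ (1 - 2 * ζ)) :=
    mul_le_mul_of_nonneg_right ht
      (sub_nonneg.mpr (Real.rpow_le_rpow_of_exponent_le hn1 (by linarith)))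
  rw [mul_sub, ← Real.rpow_add hn0, ← Real.rpow_add hn0] at hgap
  have e₁ : (n : ℝ) ^ (1 - η + (1 - ζ)) = (n : ℝ) ^ (2 - η - ζ) := by ring_nf
  have e₂ : (n : ℝ) ^ (1 - η + (1 - 2 * ζ)) = (n : ℝ) ^ (2 - η - 2 * ζ) := by ring_nf
  have e₃ : (n : ℝ) ^ (2 - 2 * η) = n * (n : ℝ) ^ (1 - 2 * η) := by
    rw [← Real.rpow_one_add' hn0.le (by linarith)]; ring_nf
  rw [Real.rpow_one] at h₄
  -- `t (n^(1-ζ) - n^(1-2ζ)) ≥ n^(2-η-ζ) - n^(2-η-2ζ)`, and `n^(2-η-ζ)` dominates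
  -- each of the error terms `n^(2-η-2ζ)`, `n^(1-ζ)`, `n^(2-2η)`, `n`.
  have key : (n : ℝ) ^ (1 - 2 * ζ) * t ≤ D * t := by nlinarith
  exact le_of_mul_le_mul_right key (by linarith)

namespace SimpleGraph

variable {V : Type*} (G : SimpleGraph V)

def richSubgraph (S T : Set V) (θ : ℝ) : SimpleGraph V :=
  G ⊓ fromRel fun u w => u ∈ S ∧ θ ≤ ((T ∩ G.neighborSet w).ncard : ℝ)

theorem mem_Mpair_of_codegree [Finite V] {ζ : ℝ} {n : ℕ} {u w z : V} (hzu : z ≠ u)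
    (hzw : G.Adj z w)
    (hcod : (n : ℝ) ^ (1 - ζ) + 1 ≤ ((G.neighborSet z ∩ G.neighborSet u).ncard : ℝ)) :
    z ∈ Mpair ζ n G u w := by
  refine ⟨hzu, G.ne_of_adj hzw, ?_⟩
  have hsub : (G.neighborSet z ∩ G.neighborSet u) \ {w} ⊆
      {w' | w' ≠ u ∧ w' ≠ w ∧ G.Adj z w' ∧ FormC4With G u w z w'} := by
    rintro w' ⟨⟨hzw', huw'⟩, hw'w⟩
    exact ⟨(G.ne_of_adj huw').symm, hw'w, hzw', Or.inl ⟨hzw.symm, huw'.symm⟩⟩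
  have hcard : ((G.neighborSet z ∩ G.neighborSet u).ncard : ℝ) ≤
      ({w' | w' ≠ u ∧ w' ≠ w ∧ G.Adj z w' ∧ FormC4With G u w z w'}.ncard : ℝ) + 1 := by
    exact_mod_cast Set.ncard_le_ncard_add_one_of_sdiff_singleton_subset hsub
  linarith

theorem Mpair_subset_Medge (ζ : ℝ) (n : ℕ) (x y : V) :
    Mpair ζ n G x y ⊆ Medge ζ n G s(x, y) :=
  fun _ hz => ⟨x, y, rfl, hz⟩

theorem le_ncard_Mpair_inter [Finite V] {ζ θ : ℝ} {n : ℕ} {T : Set V} {u w : V}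
    (hcod : ∀ z ∈ T, z ≠ u →
      (n : ℝ) ^ (1 - ζ) + 1 ≤ ((G.neighborSet z ∩ G.neighborSet u).ncard : ℝ))
    (hw : θ + 1 ≤ ((T ∩ G.neighborSet w).ncard : ℝ)) :
    θ ≤ ((Mpair ζ n G u w ∩ T).ncard : ℝ) := by
  have hsub : (T ∩ G.neighborSet w) \ {u} ⊆ Mpair ζ n G u w ∩ T := by
    rintro z ⟨⟨hzT, hwz⟩, hzu⟩
    exact ⟨G.mem_Mpair_of_codegree hzu hwz.symm (hcod z hzT hzu), hzT⟩
  have hcard :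
      ((T ∩ G.neighborSet w).ncard : ℝ) ≤ ((Mpair ζ n G u w ∩ T).ncard : ℝ) + 1 := by
    exact_mod_cast Set.ncard_le_ncard_add_one_of_sdiff_singleton_subset hsub
  linarith

theorem le_ncard_Medge_inter_of_mem_edgeSet [Finite V] {ζ θ : ℝ} {n : ℕ} {S T : Set V}
    (hTS : T ⊆ S)
    (hcod : ∀ u ∈ S, ∀ v ∈ S, u ≠ v →
      (n : ℝ) ^ (1 - ζ) + 1 ≤ ((G.neighborSet u ∩ G.neighborSet v).ncard : ℝ))
    {e : Sym2 V} (he : e ∈ (G.richSubgraph S T (θ + 1)).edgeSet) :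
    θ ≤ ((Medge ζ n G e ∩ T).ncard : ℝ) := by
  induction e using Sym2.ind with
  | _ u w =>
    suffices key : ∀ {u w : V}, u ∈ S → θ + 1 ≤ ((T ∩ G.neighborSet w).ncard : ℝ) →
        θ ≤ ((Medge ζ n G s(u, w) ∩ T).ncard : ℝ) by
      obtain ⟨-, -, ⟨hu, hw⟩ | ⟨hw, hu⟩⟩ := he
      exacts [key hu hw, Sym2.eq_swap ▸ key hw hu]
    intro u w hu hw
    refine (G.le_ncard_Mpair_inter (fun z hz hzu => hcod z (hTS hz) u hu hzu) hw).trans ?_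
    exact Nat.cast_le.mpr <| Set.ncard_le_ncard <|
      Set.inter_subset_inter_left T (G.Mpair_subset_Medge ζ n u w)

theorem sum_card_inter_neighborFinset_comm [Fintype V] [DecidableRel G.Adj] [DecidableEq V]
    (s t : Finset V) :
    ∑ w ∈ s, #(t ∩ G.neighborFinset w) = ∑ z ∈ t, #(G.neighborFinset z ∩ s) := by
  convert sum_card_bipartiteAbove_eq_sum_card_bipartiteBelow (s := s) (t := t) G.Adj using 3
  · ext; simp [bipartiteAbove]
  · ext; simp [bipartiteBelow, adj_comm, and_comm]

theorem card_sub_one_mul_le [Fintype V] [DecidableRel G.Adj] [DecidableEq V] (T : Finset V)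
    (v : V) {c θ : ℝ} (hc : 0 ≤ c) (hθ : 0 ≤ θ)
    (hcod : ∀ z ∈ T, z ≠ v → c ≤ #(G.neighborFinset z ∩ G.neighborFinset v)) :
    (#T - 1) * c ≤ #{w ∈ G.neighborFinset v | θ ≤ #(T ∩ G.neighborFinset w)} * #T +
      Fintype.card V * θ := by
  have herase : (#T : ℝ) - 1 ≤ #(T.erase v) := by
    have := pred_card_le_card_erase (s := T) (a := v)
    rw [sub_le_iff_le_add]
    exact_mod_cast (by omega : #T ≤ #(T.erase v) + 1)
  calc (#T - 1) * c ≤ #(T.erase v) * c := by gcongr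
    _ ≤ ∑ z ∈ T.erase v, (#(G.neighborFinset z ∩ G.neighborFinset v) : ℝ) := by
      simpa using card_nsmul_le_sum _ _ c fun z hz =>
        hcod z (mem_of_mem_erase hz) (ne_of_mem_erase hz)
    _ ≤ ∑ z ∈ T, (#(G.neighborFinset z ∩ G.neighborFinset v) : ℝ) :=
      sum_le_sum_of_subset_of_nonneg (erase_subset v T) fun _ _ _ => by positivity
    _ = ∑ w ∈ G.neighborFinset v, (#(T ∩ G.neighborFinset w) : ℝ) := by
      exact_mod_cast (G.sum_card_inter_neighborFinset_comm _ T).symm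
    _ ≤ #{w ∈ G.neighborFinset v | θ ≤ #(T ∩ G.neighborFinset w)} * #T +
        #(G.neighborFinset v) * θ :=
      sum_le_card_filter_mul_add _ _ hθ fun w _ => by exact_mod_cast card_le_card inter_subset_left
    _ ≤ _ := by gcongr; exact card_le_univ _

theorem sub_one_mul_le_ncard_neighborSet_richSubgraph [Fintype V] {S T : Set V} {c θ : ℝ}
    (hc : 0 ≤ c) (hθ : 0 ≤ θ) {v : V} (hv : v ∈ S)
    (hcod : ∀ z ∈ T, z ≠ v → c ≤ ((G.neighborSet z ∩ G.neighborSet v).ncard : ℝ)) :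
    ((T.ncard : ℝ) - 1) * c ≤
      ((G.richSubgraph S T θ).neighborSet v).ncard * T.ncard + Fintype.card V * θ := by
  classical
  lift T to Finset V using T.toFinite
  have hinter (s : Finset V) (w : V) :
      ((s : Set V) ∩ G.neighborSet w).ncard = #(s ∩ G.neighborFinset w) := by
    rw [← Set.ncard_coe_finset, coe_inter, coe_neighborFinset]
  have hrich : ↑{w ∈ G.neighborFinset v | θ ≤ #(T ∩ G.neighborFinset w)} ⊆
      (G.richSubgraph S T θ).neighborSet v := by
    intro w hw
    obtain ⟨hvw, hw⟩ := mem_filter.mp (mem_coe.mp hw)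
    rw [mem_neighborFinset] at hvw
    exact ⟨hvw, G.ne_of_adj hvw, Or.inl ⟨hv, by rw [hinter]; exact hw⟩⟩
  rw [Set.ncard_coe_finset]
  refine (G.card_sub_one_mul_le T v hc hθ fun z hz hzv => ?_).trans ?_
  · rw [← hinter, coe_neighborFinset]
    exact hcod z hz hzv
  · gcongr
    exact Set.ncard_coe_finset _ ▸ Set.ncard_le_ncard hrich

end SimpleGraph

theorem stmt9 (η ζ : ℝ) (h0 : 0 < ζ) (h1 : ζ ≤ η / 2) (h2 : η / 2 < 1 / 4) :
    ∃ n₀ : ℕ, ∀ n : ℕ, n₀ ≤ n →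
      ∀ (G : SimpleGraph (Fin n)) (S T : Set (Fin n)), T ⊆ S →
        (n : ℝ) ^ (1 - η) ≤ (T.ncard : ℝ) → T.ncard ≤ S.ncard →
        (∀ u ∈ S, ∀ v ∈ S, u ≠ v →
          (n : ℝ) ^ (1 - ζ) + 1 ≤ (((G.neighborSet u) ∩ (G.neighborSet v)).ncard : ℝ)) →
        ∃ G' : SimpleGraph (Fin n), G' ≤ G ∧
          (∀ v ∈ S, (n : ℝ) ^ (1 - 2 * ζ) ≤ ((G'.neighborSet v).ncard : ℝ)) ∧
          (∀ e ∈ G'.edgeSet, (n : ℝ) ^ (1 - 2 * η) ≤ (((Medge ζ n G e) ∩ T).ncard : ℝ)) := by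
  obtain ⟨n₀, hn₀⟩ :=
    eventually_atTop.mp (eventually_rpow_le_of_sub_one_mul_le h0 (by linarith) (by linarith))
  refine ⟨n₀, fun n hn G S T hTS hT _ hcod => ⟨G.richSubgraph S T ((n : ℝ) ^ (1 - 2 * η) + 1),
    inf_le_left, fun v hv => hn₀ n hn _ _ hT ?_, fun e he =>
    G.le_ncard_Medge_inter_of_mem_edgeSet hTS hcod he⟩⟩
  simpa using G.sub_one_mul_le_ncard_neighborSet_richSubgraph (by positivity) (by positivity) hv
    fun z hz hzv => hcod z (hTS hz) v hv hzv
end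

section
/- For all reals ζ and η with 0 < ζ < η < 1/4 there exists n₀ ∈ ℕ such that the following holds for all n ≥ n₀. Let G be an n-vertex graph and S ⊆ V(G), and suppose there exist pairwise disjoint edge sets E₁, …, E_t ⊆ E(G) with t = ⌊n^{1−3η}⌋ such that |S ∖ M_{G,ζ}(E_i)| ≤ n^{1−η} for each i ∈ [t]. Then there exist a subgraph G' ⊆ G and a set B ⊆ S with the following properties: (i) |B| ≤ 2n^{1−η}; (ii) d_{G'}(v) ≥ n^{1−2ζ} for every v ∈ S∖B; (iii) for every edge e ∈ E(G') there are at least n^{1−4η} edges e' ∈ ⋃_{i∈[t]} E_i such that e and e' form a C4 in G. -/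
/-- `M_{G,ζ}(E)` for a set of edges `E`. -/
def MsetOfEdges {V : Type*} (ζ : ℝ) (n : ℕ) (G : SimpleGraph V) (E : Set (Sym2 V)) :
    Set V :=
  ⋃ e ∈ E, Medge ζ n G e

/-- Two non-incident edges `e`, `e'` of `G` form a `C₄` in `G`. -/
def FormC4Edges {V : Type*} (G : SimpleGraph V) (e e' : Sym2 V) : Prop :=
  e ∈ G.edgeSet ∧ e' ∈ G.edgeSet ∧ (∀ v : V, ¬ (v ∈ e ∧ v ∈ e')) ∧
    ∃ x y z w : V, e = s(x, y) ∧ e' = s(z, w) ∧ G.Adj y z ∧ G.Adj w x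

open Finset Function

section C4Counting

variable {V ι : Type*} {G : SimpleGraph V}

lemma formC4Edges_of_formC4With {x y v w : V} (hxy : G.Adj x y) (hvw : G.Adj v w)
    (hvx : v ≠ x) (hvy : v ≠ y) (hwx : w ≠ x) (hwy : w ≠ y) (hC : FormC4With G x y v w) :
    FormC4Edges G s(v, w) s(x, y) := by
  refine ⟨hvw, hxy, ?_, ?_⟩
  · rintro u ⟨hu₁, hu₂⟩
    rw [Sym2.mem_iff] at hu₁ hu₂
    rcases hu₁ with rfl | rfl <;> rcases hu₂ with rfl | rfl <;> simp_all
  · rcases hC with ⟨h₁, h₂⟩ | ⟨h₁, h₂⟩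
    · exact ⟨w, v, y, x, Sym2.eq_swap, Sym2.eq_swap, h₁.symm, h₂.symm⟩
    · exact ⟨v, w, y, x, rfl, Sym2.eq_swap, h₁.symm, h₂.symm⟩

lemma exists_finset_formC4Edges_of_mem_msetOfEdges [Fintype V] {ζ : ℝ} {n : ℕ}
    {E : Set (Sym2 V)} (hE : E ⊆ G.edgeSet) {v : V} (hv : v ∈ MsetOfEdges ζ n G E) :
    ∃ e ∈ E, ∃ W : Finset V,
      (n : ℝ) ^ (1 - ζ) ≤ #W ∧ ∀ w ∈ W, FormC4Edges G s(v, w) e := by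
  classical
  simp only [MsetOfEdges, Set.mem_iUnion] at hv
  obtain ⟨_, he, x, y, rfl, hvx, hvy, hcard⟩ := hv
  have hfin := Set.toFinite {w | w ≠ x ∧ w ≠ y ∧ G.Adj v w ∧ FormC4With G x y v w}
  refine ⟨s(x, y), he, hfin.toFinset, by rwa [← Set.ncard_eq_toFinset_card], ?_⟩
  rintro w hw
  obtain ⟨hwx, hwy, hvw, hC⟩ := hfin.mem_toFinset.mp hw
  exact formC4Edges_of_formC4With (hE he) hvw hvx hvy hwx hwy hC

def c4RichSubgraph (G : SimpleGraph V) (U : Set (Sym2 V)) (b : ℝ) : SimpleGraph V :=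
  G.deleteEdges {e | ((U ∩ {e' | FormC4Edges G e e'}).ncard : ℝ) < b}

lemma le_ncard_of_mem_edgeSet_c4RichSubgraph {U : Set (Sym2 V)} {b : ℝ} {e : Sym2 V}
    (he : e ∈ (c4RichSubgraph G U b).edgeSet) :
    b ≤ ((U ∩ {e' | FormC4Edges G e e'}).ncard : ℝ) := by
  rw [c4RichSubgraph, SimpleGraph.edgeSet_deleteEdges] at he
  exact not_lt.mp he.2

variable [Fintype V] [DecidableEq V] {E : ι → Set (Sym2 V)} {v : V} {I : Finset ι}
  {e : ι → Sym2 V} {W : ι → Finset V}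

/-- Distinct indices give distinct edges `e i`, since the `E i` are disjoint. -/
lemma card_filter_mem_le_ncard_formC4Edges (hdisj : Pairwise (Disjoint on E))
    (he : ∀ i ∈ I, e i ∈ E i) (hW : ∀ i ∈ I, ∀ w ∈ W i, FormC4Edges G s(v, w) (e i))
    (w : V) :
    #{i ∈ I | w ∈ W i} ≤ ((⋃ i, E i) ∩ {e' | FormC4Edges G s(v, w) e'}).ncard := by
  rw [← Set.ncard_coe_finset]
  refine Set.ncard_le_ncard_of_injOn e ?_ ?_
  · intro i hi
    obtain ⟨hiI, hiw⟩ := mem_filter.mp (mem_coe.mp hi)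
    exact ⟨Set.mem_iUnion.mpr ⟨i, he i hiI⟩, hW i hiI w hiw⟩
  · intro i hi j hj hij
    by_contra hne
    exact Set.disjoint_left.mp (hdisj hne) (he i (mem_filter.mp (mem_coe.mp hi)).1)
      (hij ▸ he j (mem_filter.mp (mem_coe.mp hj)).1)

/-- Double count the pairs `(i, w)` with `w ∈ W i`: a neighbour `w` of `v` in the rich subgraph
lies in at most `#I` of the `W i`, any other vertex in fewer than `b`. -/
lemma sum_card_le_card_mul_ncard_neighborSet_add (hdisj : Pairwise (Disjoint on E))
    (he : ∀ i ∈ I, e i ∈ E i) (hW : ∀ i ∈ I, ∀ w ∈ W i, FormC4Edges G s(v, w) (e i))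
    {b : ℝ} (hb : 0 ≤ b) :
    ∑ i ∈ I, (#(W i) : ℝ) ≤
      #I * ((c4RichSubgraph G (⋃ i, E i) b).neighborSet v).ncard + Fintype.card V * b := by
  classical
  set G' := c4RichSubgraph G (⋃ i, E i) b
  have hfibre (w : V) :
      (#{i ∈ I | w ∈ W i} : ℝ) ≤ (if G'.Adj v w then (#I : ℝ) else 0) + b := by
    split_ifs with hadj
    · have : (#{i ∈ I | w ∈ W i} : ℝ) ≤ #I := by exact_mod_cast card_filter_le I _
      linarith
    · rcases (I.filter (w ∈ W ·)).eq_empty_or_nonempty with h | ⟨i, hi⟩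
      · simp [h, hb]
      · obtain ⟨hiI, hiw⟩ := mem_filter.mp hi
        have hpoor : (((⋃ i, E i) ∩ {e' | FormC4Edges G s(v, w) e'}).ncard : ℝ) < b := by
          by_contra hrich
          exact hadj (SimpleGraph.deleteEdges_adj.mpr ⟨(hW i hiI w hiw).1, hrich⟩)
        have := card_filter_mem_le_ncard_formC4Edges hdisj he hW w
        have : (#{i ∈ I | w ∈ W i} : ℝ) ≤
            ((⋃ i, E i) ∩ {e' | FormC4Edges G s(v, w) e'}).ncard := by exact_mod_cast this
        linarith
  have hdeg : ((G'.neighborSet v).ncard : ℝ) = #{w | G'.Adj v w} := by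
    rw [← Set.ncard_coe_finset]
    congr
    ext
    simp
  calc ∑ i ∈ I, (#(W i) : ℝ) = ∑ w, (#{i ∈ I | w ∈ W i} : ℝ) := by
        have := sum_card_bipartiteAbove_eq_sum_card_bipartiteBelow (fun i w => w ∈ W i)
          (s := I) (t := univ)
        simp only [bipartiteAbove, bipartiteBelow, filter_mem_eq_inter, univ_inter] at this
        exact_mod_cast this
    _ ≤ ∑ w, ((if G'.Adj v w then (#I : ℝ) else 0) + b) := sum_le_sum fun w _ => hfibre w
    _ = _ := by
        rw [sum_add_distrib, sum_ite, sum_const, sum_const_zero, sum_const, hdeg, card_univ]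
        simp only [nsmul_eq_mul]
        ring

lemma card_mul_rpow_le_card_mul_ncard_neighborSet_add {ζ : ℝ} {n : ℕ}
    (hE : ∀ i, E i ⊆ G.edgeSet) (hdisj : Pairwise (Disjoint on E))
    (hI : ∀ i ∈ I, v ∈ MsetOfEdges ζ n G (E i)) {b : ℝ} (hb : 0 ≤ b) :
    #I * (n : ℝ) ^ (1 - ζ) ≤
      #I * ((c4RichSubgraph G (⋃ i, E i) b).neighborSet v).ncard + Fintype.card V * b := by
  have hwit (i : ι) : ∃ (e : Sym2 V) (W : Finset V), i ∈ I →
      e ∈ E i ∧ (n : ℝ) ^ (1 - ζ) ≤ #W ∧ ∀ w ∈ W, FormC4Edges G s(v, w) e := by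
    by_cases hi : i ∈ I
    · obtain ⟨e, he, W, hW⟩ := exists_finset_formC4Edges_of_mem_msetOfEdges (hE i) (hI i hi)
      exact ⟨e, W, fun _ => ⟨he, hW⟩⟩
    · exact ⟨s(v, v), ∅, fun h => absurd h hi⟩
  choose e W hEW using hwit
  calc #I * (n : ℝ) ^ (1 - ζ) = ∑ _i ∈ I, (n : ℝ) ^ (1 - ζ) := by
        rw [sum_const, nsmul_eq_mul]
    _ ≤ ∑ i ∈ I, (#(W i) : ℝ) := sum_le_sum fun i hi => (hEW i hi).2.1
    _ ≤ _ := sum_card_le_card_mul_ncard_neighborSet_add hdisj (fun i hi => (hEW i hi).1)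
        (fun i hi => (hEW i hi).2.2) hb

end C4Counting

open Classical in
/-- Markov's inequality for the number of sets `M i` missing a vertex of `S`. -/
lemma ncard_setOf_lt_two_mul_card_notMem_le {V ι : Type*} [Fintype V] [Fintype ι]
    (S : Set V) (M : ι → Set V) {x : ℝ} (hx : 0 ≤ x)
    (hS : ∀ i, ((S \ M i).ncard : ℝ) ≤ x) :
    (({v | v ∈ S ∧ Fintype.card ι < 2 * #{i | v ∉ M i}} : Set V).ncard : ℝ) ≤ 2 * x := by
  set f : V → ℕ := fun v => #{i | v ∉ M i}
  set B := {v ∈ S.toFinset | Fintype.card ι < 2 * f v}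
  have hB : ({v | v ∈ S ∧ Fintype.card ι < 2 * f v} : Set V) = B := by
    ext; simp [B]
  have hsum : ∑ v ∈ S.toFinset, (f v : ℝ) ≤ Fintype.card ι * x := by
    have := sum_card_bipartiteAbove_eq_sum_card_bipartiteBelow (fun v i => v ∉ M i)
      (s := S.toFinset) (t := univ)
    simp only [bipartiteAbove, bipartiteBelow] at this
    calc ∑ v ∈ S.toFinset, (f v : ℝ) = ∑ i, (#{v ∈ S.toFinset | v ∉ M i} : ℝ) := by
          exact_mod_cast this
      _ ≤ ∑ _i : ι, x := sum_le_sum fun i _ => by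
          have : (({v ∈ S.toFinset | v ∉ M i} : Finset V) : Set V) = S \ M i := by
            ext; simp
          rw [← Set.ncard_coe_finset, this]
          exact hS i
      _ = _ := by rw [sum_const, card_univ, nsmul_eq_mul]
  have hBf : (Fintype.card ι + 1 : ℝ) * #B ≤ 2 * ∑ v ∈ S.toFinset, (f v : ℝ) := by
    calc (Fintype.card ι + 1 : ℝ) * #B = ∑ _v ∈ B, (Fintype.card ι + 1 : ℝ) := by
          rw [sum_const, nsmul_eq_mul, mul_comm]
      _ ≤ ∑ v ∈ B, 2 * (f v : ℝ) := sum_le_sum fun v hv => by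
          exact_mod_cast (mem_filter.mp hv).2
      _ ≤ ∑ v ∈ S.toFinset, 2 * (f v : ℝ) :=
          sum_le_sum_of_subset_of_nonneg (filter_subset _ _) fun _ _ _ => by positivity
      _ = _ := by rw [mul_sum]
  rw [hB, Set.ncard_coe_finset]
  have : (Fintype.card ι + 1 : ℝ) * #B ≤ (Fintype.card ι + 1 : ℝ) * (2 * x) := by nlinarith
  exact le_of_mul_le_mul_left this (by positivity)

lemma rpow_one_sub_two_mul_le_of_card_mul_le {n : ℕ} {ζ η k d : ℝ} (hn : 0 < n)
    (hk : (n : ℝ) ^ (1 - 3 * η) ≤ 4 * k) (h8 : 8 ≤ (n : ℝ) ^ (η - ζ)) (h2 : 2 ≤ (n : ℝ) ^ ζ)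
    (h : k * (n : ℝ) ^ (1 - ζ) ≤ k * d + n * (n : ℝ) ^ (1 - 4 * η)) :
    (n : ℝ) ^ (1 - 2 * ζ) ≤ d := by
  have hN : (0 : ℝ) < n := by exact_mod_cast hn
  have hsplit₁ :
      (n : ℝ) * (n : ℝ) ^ (1 - 4 * η) = (n : ℝ) ^ (1 - 3 * η) * (n : ℝ) ^ (1 - η) := by
    rw [← Real.rpow_add hN]
    nth_rewrite 1 [← Real.rpow_one (n : ℝ)]
    rw [← Real.rpow_add hN]
    ring_nf
  have hsplit₂ : (n : ℝ) ^ (1 - ζ) = (n : ℝ) ^ (1 - η) * (n : ℝ) ^ (η - ζ) := by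
    rw [← Real.rpow_add hN]; ring_nf
  have hsplit₃ : (n : ℝ) ^ (1 - ζ) = (n : ℝ) ^ (1 - 2 * ζ) * (n : ℝ) ^ ζ := by
    rw [← Real.rpow_add hN]; ring_nf
  have hk₀ : 0 < k := by linarith [Real.rpow_pos_of_pos hN (1 - 3 * η)]
  have hη : 0 ≤ (n : ℝ) ^ (1 - η) := by positivity
  have hsmall : (n : ℝ) * (n : ℝ) ^ (1 - 4 * η) ≤ k * (n : ℝ) ^ (1 - ζ) / 2 := by
    rw [hsplit₁, hsplit₂]
    have := mul_le_mul_of_nonneg_left h8 (by positivity : 0 ≤ k * (n : ℝ) ^ (1 - η))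
    nlinarith [mul_le_mul_of_nonneg_right hk hη]
  have hhalf : (n : ℝ) ^ (1 - ζ) ≤ 2 * d := by nlinarith
  have hζ : 0 ≤ (n : ℝ) ^ (1 - 2 * ζ) := by positivity
  nlinarith

open Filter in
theorem stmt10 (ζ η : ℝ) (h0 : 0 < ζ) (h1 : ζ < η) (h2 : η < 1 / 4) :
    ∃ n₀ : ℕ, ∀ n : ℕ, n₀ ≤ n →
      ∀ (G : SimpleGraph (Fin n)) (S : Set (Fin n))
        (E : Fin ⌊(n : ℝ) ^ (1 - 3 * η)⌋₊ → Set (Sym2 (Fin n))),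
        (∀ i, E i ⊆ G.edgeSet) →
        (∀ i j, i ≠ j → Disjoint (E i) (E j)) →
        (∀ i, ((S \ MsetOfEdges ζ n G (E i)).ncard : ℝ) ≤ (n : ℝ) ^ (1 - η)) →
        ∃ (G' : SimpleGraph (Fin n)) (B : Set (Fin n)), G' ≤ G ∧ B ⊆ S ∧
          (B.ncard : ℝ) ≤ 2 * (n : ℝ) ^ (1 - η) ∧
          (∀ v ∈ S \ B, (n : ℝ) ^ (1 - 2 * ζ) ≤ ((G'.neighborSet v).ncard : ℝ)) ∧
          (∀ e ∈ G'.edgeSet,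
            (n : ℝ) ^ (1 - 4 * η) ≤
              ((((⋃ i, E i) ∩ {e' : Sym2 (Fin n) | FormC4Edges G e e'})).ncard : ℝ)) := by
  have hpow {c : ℝ} (hc : 0 < c) (M : ℝ) : ∀ᶠ n : ℕ in atTop, M ≤ (n : ℝ) ^ c :=
    ((tendsto_rpow_atTop hc).comp tendsto_natCast_atTop_atTop).eventually_ge_atTop M
  obtain ⟨n₀, hn₀⟩ := eventually_atTop.mp <| (eventually_gt_atTop 0).and <|
    (hpow (sub_pos.mpr h1) 8).and <| (hpow h0 2).and (hpow (by linarith : 0 < 1 - 3 * η) 1)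
  refine ⟨n₀, fun n hn => ?_⟩
  obtain ⟨hn, hn8, hn2, hn1⟩ := hn₀ n hn
  have ht : (n : ℝ) ^ (1 - 3 * η) ≤ 2 * ⌊(n : ℝ) ^ (1 - 3 * η)⌋₊ := by
    have : (1 : ℝ) ≤ ⌊(n : ℝ) ^ (1 - 3 * η)⌋₊ := by
      exact_mod_cast (Nat.one_le_floor_iff _).mpr hn1
    linarith [Nat.lt_floor_add_one ((n : ℝ) ^ (1 - 3 * η))]
  generalize ⌊(n : ℝ) ^ (1 - 3 * η)⌋₊ = t at ht ⊢
  intro G S E hE hdisj hS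
  classical
  refine ⟨c4RichSubgraph G (⋃ i, E i) ((n : ℝ) ^ (1 - 4 * η)),
    {v | v ∈ S ∧ Fintype.card (Fin t) < 2 * #{i | v ∉ MsetOfEdges ζ n G (E i)}},
    G.deleteEdges_le _, fun v hv => hv.1,
    ncard_setOf_lt_two_mul_card_notMem_le S _ (by positivity) hS, ?_,
    fun e he => le_ncard_of_mem_edgeSet_c4RichSubgraph he⟩
  rintro v ⟨hvS, hvB⟩
  have hsplit := card_filter_add_card_filter_not (s := (univ : Finset (Fin t)))
    (fun i => v ∈ MsetOfEdges ζ n G (E i))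
  rw [card_univ, Fintype.card_fin] at hsplit
  have hout : ¬ t < 2 * #{i | v ∉ MsetOfEdges ζ n G (E i)} :=
    fun h => hvB ⟨hvS, by rwa [Fintype.card_fin]⟩
  set I : Finset (Fin t) := {i | v ∈ MsetOfEdges ζ n G (E i)}
  have hI : (t : ℝ) ≤ 2 * #I := by exact_mod_cast (by omega : t ≤ 2 * #I)
  refine rpow_one_sub_two_mul_le_of_card_mul_le (k := #I) hn (by linarith) hn8 hn2 ?_
  simpa using card_mul_rpow_le_card_mul_ncard_neighborSet_add hE hdisj (I := I)
    (fun i hi => (mem_filter.mp hi).2) (by positivity : (0 : ℝ) ≤ (n : ℝ) ^ (1 - 4 * η))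
end

section
/- For every real δ with 0 < δ ≤ 1 there exist η₀ > 0 and, for each η ∈ (0, η₀], an n₀ ∈ ℕ such that the following holds for all n ≥ n₀. Let G be an n-vertex graph, let 𝒞 be a 2-factor of G with e(H_𝒞) ≥ n^{2−η}, let k be an integer with 2 ≤ k ≤ n^{1−δ}, and let 𝒞* be a 2-factor of G consisting of exactly k−1 cycles such that |E(𝒞*) △ E(𝒞)| ≤ 12(k−1). Then there exist (not necessarily distinct) cycles C and C' among the components of 𝒞* and sets X ⊆ E(C) and Y ⊆ E(C'), each of size at least n^{δ/2}, such that Σ_{e∈X} |N_{H_𝒞}(e) ∩ Y| ≥ 4·|X ∪ Y|^{1+η}. -/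
/-- `H` is a 2-factor of `G`: a spanning 2-regular subgraph of `G`
(viewed as a graph on the same vertex set). -/
def IsTwoFactor {V : Type*} (G H : SimpleGraph V) : Prop :=
  H ≤ G ∧ ∀ v : V, (H.neighborSet v).ncard = 2

/-- The number of cycles of a 2-factor, i.e. its number of connected components. -/
noncomputable def numCycles {V : Type*} (H : SimpleGraph V) : ℕ :=
  Nat.card H.ConnectedComponent

/-- Adjacency in the auxiliary graph `H_C`: two distinct non-incident edges `e, e'` of the
2-factor (or Hamilton cycle) `C` are adjacent iff `G` contains a 4-cycle containing both
`e` and `e'` and no other edge of `C`. -/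
def AuxAdj {V : Type*} (G C : SimpleGraph V) (e e' : Sym2 V) : Prop :=
  e ∈ C.edgeSet ∧ e' ∈ C.edgeSet ∧ e ≠ e' ∧ (∀ v : V, ¬ (v ∈ e ∧ v ∈ e')) ∧
    ∃ x y z w : V, e = s(x, y) ∧ e' = s(z, w) ∧
      G.Adj y z ∧ G.Adj w x ∧ ¬ C.Adj y z ∧ ¬ C.Adj w x

/-- `e(H_C)`: the number of edges of the auxiliary graph `H_C`. -/
noncomputable def auxEdgeCount {V : Type*} (G C : SimpleGraph V) : ℕ :=
  ({q : Sym2 (Sym2 V) | ∃ e e' : Sym2 V, AuxAdj G C e e' ∧ q = s(e, e')}).ncard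

/-- `N_{H_C}(e)`: the neighbourhood of the edge `e` in the auxiliary graph `H_C`. -/
def auxNeighborSet {V : Type*} (G C : SimpleGraph V) (e : Sym2 V) : Set (Sym2 V) :=
  {e' : Sym2 V | AuxAdj G C e e'}

/-- The edge set of the cycle of the 2-factor `H` corresponding to the connected
component `c`. -/
def compEdges {V : Type*} (H : SimpleGraph V) (c : H.ConnectedComponent) :
    Set (Sym2 V) :=
  {e : Sym2 V | e ∈ H.edgeSet ∧ ∀ v ∈ e, H.connectedComponentMk v = c}

/-!
Suppose the conclusion fails and count the ordered pairs of adjacent edges of `H_𝒞`; there are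
at least `e(H_𝒞) ≥ n^{2-η}` of them. Group the edges of `𝒞` by the cycle of `𝒞*` containing
them and call a cycle large if it carries at least `n^{δ/2}` edges of `𝒞`. An edge of `𝒞` outside
the large cycles is either missing from `𝒞*` (at most `12(k-1)` edges) or lies on one of fewer
than `k` small cycles, so there are `O(n^{1-δ/2})` such edges, meeting `O(n^{2-δ/2})` pairs.
Between two large cycles the failed conclusion bounds the pairs by
`4|X ∪ Y|^{1+η} ≤ 4(|X| + |Y|) n^η`, which sums to at most `8 n^{2-δ+η}` over all pairs of
large cycles. For `η ≤ δ/8` both bounds are `o(n^{2-η})`, a contradiction for large `n`.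
-/

open Finset Filter Function

theorem card_filter_product_le_add_card_sdiff {α : Type*} [DecidableEq α] (r : α → α → Prop)
    [DecidableRel r] (S U : Finset α) :
    #{p ∈ S ×ˢ S | r p.1 p.2} ≤ #{p ∈ U ×ˢ U | r p.1 p.2} + 2 * #(S \ U) * #S := by
  have hsub : {p ∈ S ×ˢ S | r p.1 p.2} ⊆
      {p ∈ U ×ˢ U | r p.1 p.2} ∪ ((S \ U) ×ˢ S ∪ S ×ˢ (S \ U)) := by
    intro p hp
    simp only [mem_filter, mem_product, mem_union, Finset.mem_sdiff] at hp ⊢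
    tauto
  calc _ ≤ _ := card_le_card hsub
    _ ≤ #{p ∈ U ×ˢ U | r p.1 p.2} + (#((S \ U) ×ˢ S) + #(S ×ˢ (S \ U))) :=
      (card_union_le _ _).trans (by gcongr; exact card_union_le _ _)
    _ = _ := by rw [card_product, card_product]; ring

theorem card_filter_biUnion_product_le {α ι : Type*} [DecidableEq α] (r : α → α → Prop)
    [DecidableRel r] (I : Finset ι) (X : ι → Finset α) :
    #{p ∈ I.biUnion X ×ˢ I.biUnion X | r p.1 p.2} ≤
      ∑ i ∈ I, ∑ j ∈ I, #{p ∈ X i ×ˢ X j | r p.1 p.2} := by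
  calc _ ≤ #(I.biUnion fun i => I.biUnion fun j => {p ∈ X i ×ˢ X j | r p.1 p.2}) := by
        apply card_le_card
        intro p hp
        simp only [mem_filter, mem_product, mem_biUnion] at hp ⊢
        obtain ⟨⟨⟨i, hi, h1⟩, ⟨j, hj, h2⟩⟩, hr⟩ := hp
        exact ⟨i, hi, j, hj, ⟨h1, h2⟩, hr⟩
    _ ≤ _ := card_biUnion_le.trans (sum_le_sum fun i _ => card_biUnion_le)

theorem card_filter_product_eq_sum {α : Type*} (r : α → α → Prop) [DecidableRel r]
    (X Y : Finset α) : #{p ∈ X ×ˢ Y | r p.1 p.2} = ∑ x ∈ X, #{y ∈ Y | r x y} := by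
  simp only [card_filter, sum_product]

theorem sum_sum_add_eq {ι R : Type*} [CommSemiring R] (I : Finset ι) (f : ι → R) :
    ∑ i ∈ I, ∑ j ∈ I, (f i + f j) = 2 * #I * ∑ i ∈ I, f i := by
  simp only [sum_add_distrib, sum_const, nsmul_eq_mul, ← mul_sum]
  ring

theorem rpow_one_add_le {u a N η : ℝ} (hu : 0 ≤ u) (hua : u ≤ a) (huN : u ≤ N) (hη : 0 ≤ η) :
    u ^ (1 + η) ≤ a * N ^ η := by
  rw [Real.rpow_add' hu (by linarith), Real.rpow_one]
  exact mul_le_mul hua (Real.rpow_le_rpow hu huN hη) (by positivity) (hu.trans hua)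

section BlockCounting

variable {α ι : Type*} [DecidableEq α] [Fintype ι] (S : Finset α) (X : ι → Finset α)

noncomputable def unionLargeParts (t : ℝ) : Finset α := ({i | t ≤ #(X i)} : Finset ι).biUnion X

theorem card_sdiff_biUnion_large_le {t : ℝ} (ht : 0 ≤ t) :
    (#(S \ unionLargeParts X t) : ℝ) ≤ #(S \ univ.biUnion X) + Fintype.card ι * t := by
  set small : Finset ι := {i | ¬ t ≤ #(X i)}
  have hsub : S \ unionLargeParts X t ⊆ (S \ univ.biUnion X) ∪ small.biUnion X := by
    intro e he
    simp only [small, unionLargeParts, Finset.mem_sdiff, mem_union, mem_biUnion, mem_filter,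
      mem_univ, true_and] at he ⊢
    grind
  have hsmall : (#(small.biUnion X) : ℝ) ≤ Fintype.card ι * t :=
    calc (#(small.biUnion X) : ℝ) ≤ ∑ i ∈ small, (#(X i) : ℝ) := by
          exact_mod_cast card_biUnion_le
      _ ≤ ∑ _i ∈ small, t := sum_le_sum fun i hi => (not_le.mp (mem_filter.mp hi).2).le
      _ ≤ Fintype.card ι * t := by
          rw [sum_const, nsmul_eq_mul]; gcongr; exact_mod_cast card_le_univ _
  calc (#(S \ unionLargeParts X t) : ℝ)
      ≤ #(S \ univ.biUnion X) + #(small.biUnion X) := by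
        exact_mod_cast (card_le_card hsub).trans (card_union_le _ _)
    _ ≤ _ := by gcongr

variable (r : α → α → Prop) [DecidableRel r] {t η : ℝ}

theorem card_filter_biUnion_large_le (hXS : ∀ i, X i ⊆ S) (hX : Pairwise (Disjoint on X))
    (hη : 0 ≤ η) (hblock : ∀ i j, t ≤ #(X i) → t ≤ #(X j) →
      ∑ x ∈ X i, (#{y ∈ X j | r x y} : ℝ) ≤ 4 * (#(X i ∪ X j) : ℝ) ^ (1 + η)) :
    (#{p ∈ unionLargeParts X t ×ˢ unionLargeParts X t | r p.1 p.2} : ℝ) ≤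
      8 * Fintype.card ι * #S ^ (1 + η) := by
  set L : Finset ι := {i | t ≤ #(X i)}
  change (#{p ∈ L.biUnion X ×ˢ L.biUnion X | r p.1 p.2} : ℝ) ≤ _
  have hblock' : ∀ i ∈ L, ∀ j ∈ L,
      (#{p ∈ X i ×ˢ X j | r p.1 p.2} : ℝ) ≤ 4 * (((#(X i) : ℝ) + #(X j)) * #S ^ η) := by
    intro i hi j hj
    rw [card_filter_product_eq_sum, Nat.cast_sum]
    refine (hblock i j (mem_filter.mp hi).2 (mem_filter.mp hj).2).trans ?_
    gcongr
    refine rpow_one_add_le (by positivity) (by exact_mod_cast card_union_le _ _) ?_ hη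
    exact_mod_cast card_le_card (union_subset (hXS i) (hXS j))
  have hsum : ∑ i ∈ L, (#(X i) : ℝ) ≤ #S := by
    rw [← Nat.cast_sum, ← card_biUnion fun i _ j _ hij => hX hij]
    exact_mod_cast card_le_card (biUnion_subset.mpr fun i _ => hXS i)
  calc (#{p ∈ L.biUnion X ×ˢ L.biUnion X | r p.1 p.2} : ℝ)
      ≤ ∑ i ∈ L, ∑ j ∈ L, (#{p ∈ X i ×ˢ X j | r p.1 p.2} : ℝ) := by
        exact_mod_cast card_filter_biUnion_product_le r L X
    _ ≤ ∑ i ∈ L, ∑ j ∈ L, 4 * (((#(X i) : ℝ) + #(X j)) * #S ^ η) :=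
        sum_le_sum fun i hi => sum_le_sum fun j hj => hblock' i hi j hj
    _ = 4 * (∑ i ∈ L, ∑ j ∈ L, ((#(X i) : ℝ) + #(X j))) * #S ^ η := by
        rw [mul_sum, sum_mul]
        refine sum_congr rfl fun i _ => ?_
        rw [mul_sum, sum_mul]
        exact sum_congr rfl fun j _ => by ring
    _ = 8 * #S ^ η * (#L * ∑ i ∈ L, (#(X i) : ℝ)) := by
        rw [sum_sum_add_eq]; ring
    _ ≤ 8 * #S ^ η * (Fintype.card ι * #S) := by
        have hL : (#L : ℝ) ≤ Fintype.card ι := by exact_mod_cast card_le_univ L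
        exact mul_le_mul_of_nonneg_left
          (mul_le_mul hL hsum (sum_nonneg fun i _ => by positivity) (by positivity))
          (by positivity)
    _ = 8 * Fintype.card ι * #S ^ (1 + η) := by
        rw [Real.rpow_add' (by positivity) (by linarith), Real.rpow_one]; ring

theorem card_filter_product_le_of_block_bound (hXS : ∀ i, X i ⊆ S)
    (hX : Pairwise (Disjoint on X)) (ht : 0 ≤ t) (hη : 0 ≤ η)
    (hblock : ∀ i j, t ≤ #(X i) → t ≤ #(X j) →
      ∑ x ∈ X i, (#{y ∈ X j | r x y} : ℝ) ≤ 4 * (#(X i ∪ X j) : ℝ) ^ (1 + η)) :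
    (#{p ∈ S ×ˢ S | r p.1 p.2} : ℝ) ≤
      8 * Fintype.card ι * #S ^ (1 + η) + 2 * (#(S \ univ.biUnion X) + Fintype.card ι * t) * #S :=
  calc (#{p ∈ S ×ˢ S | r p.1 p.2} : ℝ)
      ≤ #{p ∈ unionLargeParts X t ×ˢ unionLargeParts X t | r p.1 p.2} +
          2 * #(S \ unionLargeParts X t) * #S := by
        exact_mod_cast card_filter_product_le_add_card_sdiff r S _
    _ ≤ _ := by
        gcongr
        · exact card_filter_biUnion_large_le S X r hXS hX hη hblock
        · exact card_sdiff_biUnion_large_le S X ht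

end BlockCounting

section AuxiliaryGraph

variable {V : Type*}

theorem IsTwoFactor.ncard_edgeSet [Fintype V] {G H : SimpleGraph V} (h : IsTwoFactor G H) :
    H.edgeSet.ncard = Fintype.card V := by
  classical
  have hdeg : ∀ v, H.degree v = 2 := fun v => by
    rw [← SimpleGraph.card_neighborSet_eq_degree, ← Nat.card_eq_fintype_card,
      Nat.card_coe_set_eq, h.2 v]
  have hsum := H.sum_degrees_eq_twice_card_edges
  simp only [hdeg, sum_const, card_univ, smul_eq_mul] at hsum
  rw [← Set.ncard_coe_finset, SimpleGraph.coe_edgeFinset] at hsum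
  omega

theorem auxEdgeCount_le_card_filter (G C : SimpleGraph V)
    [Fintype C.edgeSet] [DecidableRel (AuxAdj G C)] :
    auxEdgeCount G C ≤ #{p ∈ C.edgeFinset ×ˢ C.edgeFinset | AuxAdj G C p.1 p.2} := by
  have hset : {q : Sym2 (Sym2 V) | ∃ e e' : Sym2 V, AuxAdj G C e e' ∧ q = s(e, e')} =
      (fun p : Sym2 V × Sym2 V => s(p.1, p.2)) ''
        ↑({p ∈ C.edgeFinset ×ˢ C.edgeFinset | AuxAdj G C p.1 p.2} : Finset _) := by
    ext q
    simp only [Set.mem_ofPred_eq, Set.mem_image, coe_filter, mem_product,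
      SimpleGraph.mem_edgeFinset, Prod.exists]
    constructor
    · rintro ⟨e, e', h, rfl⟩
      exact ⟨e, e', ⟨⟨h.1, h.2.1⟩, h⟩, rfl⟩
    · rintro ⟨e, e', ⟨-, h⟩, rfl⟩
      exact ⟨e, e', h, rfl⟩
  rw [auxEdgeCount, hset, ← Set.ncard_coe_finset]
  exact Set.ncard_image_le

theorem ncard_auxNeighborSet_inter (G C : SimpleGraph V) (e : Sym2 V)
    [DecidablePred (AuxAdj G C e)] (Y : Finset (Sym2 V)) :
    (auxNeighborSet G C e ∩ ↑Y).ncard = #{e' ∈ Y | AuxAdj G C e e'} := by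
  rw [← Set.ncard_coe_finset, coe_filter, Set.inter_comm]
  rfl

theorem pairwise_disjoint_compEdges (H : SimpleGraph V) : Pairwise (Disjoint on compEdges H) := by
  intro c c' hne
  refine Set.disjoint_left.mpr fun e he he' => hne ?_
  induction e using Sym2.ind with
  | h u v => exact (he.2 u (Sym2.mem_mk_left u v)).symm.trans (he'.2 u (Sym2.mem_mk_left u v))

theorem exists_mem_compEdges {H : SimpleGraph V} {e : Sym2 V} (he : e ∈ H.edgeSet) :
    ∃ c, e ∈ compEdges H c := by
  induction e using Sym2.ind with
  | h u v =>
    refine ⟨H.connectedComponentMk u, he, fun w hw => ?_⟩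
    rcases Sym2.mem_iff.mp hw with rfl | rfl
    · rfl
    · exact (SimpleGraph.ConnectedComponent.connectedComponentMk_eq_of_adj he).symm

end AuxiliaryGraph

theorem auxEdgeCount_le_of_block_bound {V : Type*} [Fintype V] [DecidableEq V]
    {G C C' : SimpleGraph V} (hC : IsTwoFactor G C) {t η : ℝ} (ht : 0 ≤ t) (hη : 0 ≤ η)
    (hblock : ∀ (c c' : C'.ConnectedComponent) (X Y : Finset (Sym2 V)),
      ↑X ⊆ compEdges C' c → ↑Y ⊆ compEdges C' c' → t ≤ #X → t ≤ #Y →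
        ∑ e ∈ X, ((auxNeighborSet G C e ∩ ↑Y).ncard : ℝ) ≤ 4 * (#(X ∪ Y) : ℝ) ^ (1 + η)) :
    (auxEdgeCount G C : ℝ) ≤ 8 * numCycles C' * (Fintype.card V : ℝ) ^ (1 + η) +
      2 * ((symmDiff C'.edgeSet C.edgeSet).ncard + numCycles C' * t) * Fintype.card V := by
  classical
  set S := C.edgeFinset
  set X : C'.ConnectedComponent → Finset (Sym2 V) := fun c => {e ∈ S | e ∈ compEdges C' c}
  have hXS : ∀ c, X c ⊆ S := fun c => filter_subset _ _
  have hX : Pairwise (Disjoint on X) := fun c c' hne => disjoint_filter.mpr fun _ _ h h' =>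
    Set.disjoint_left.mp (pairwise_disjoint_compEdges C' hne) h h'
  have hblock' : ∀ c c', t ≤ #(X c) → t ≤ #(X c') →
      ∑ e ∈ X c, (#{e' ∈ X c' | AuxAdj G C e e'} : ℝ) ≤ 4 * (#(X c ∪ X c') : ℝ) ^ (1 + η) := by
    intro c c' hc hc'
    simpa only [ncard_auxNeighborSet_inter] using hblock c c' (X c) (X c')
      (fun e he => (mem_filter.mp he).2) (fun e he => (mem_filter.mp he).2) hc hc'
  have hsdiff : (#(S \ univ.biUnion X) : ℝ) ≤ (symmDiff C'.edgeSet C.edgeSet).ncard := by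
    rw [← Set.ncard_coe_finset]
    refine Nat.cast_le.mpr (Set.ncard_le_ncard fun e he => Or.inr ⟨?_, fun he' => ?_⟩)
    · exact SimpleGraph.mem_edgeFinset.mp (Finset.mem_sdiff.mp he).1
    · obtain ⟨c, hc⟩ := exists_mem_compEdges he'
      exact (Finset.mem_sdiff.mp he).2
        (mem_biUnion.mpr ⟨c, mem_univ c, mem_filter.mpr ⟨(Finset.mem_sdiff.mp he).1, hc⟩⟩)
  have hS : (#S : ℝ) = Fintype.card V := by
    rw [← hC.ncard_edgeSet, ← SimpleGraph.coe_edgeFinset, Set.ncard_coe_finset]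
  have hcycles : (numCycles C' : ℝ) = Fintype.card C'.ConnectedComponent := by
    rw [numCycles, Nat.card_eq_fintype_card]
  calc (auxEdgeCount G C : ℝ) ≤ #{p ∈ S ×ˢ S | AuxAdj G C p.1 p.2} := by
        exact_mod_cast auxEdgeCount_le_card_filter G C
    _ ≤ 8 * Fintype.card C'.ConnectedComponent * #S ^ (1 + η) +
          2 * (#(S \ univ.biUnion X) + Fintype.card C'.ConnectedComponent * t) * #S :=
        card_filter_product_le_of_block_bound S X (AuxAdj G C) hXS hX ht hη hblock'
    _ ≤ _ := by
        rw [hS, hcycles]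
        gcongr

theorem eventually_edge_count_bound_lt {δ η : ℝ} (hδ : 0 < δ) (hη : η ≤ δ / 8) :
    ∀ᶠ N : ℝ in atTop, 8 * N ^ (1 - δ) * N ^ (1 + η) +
      2 * (12 * N ^ (1 - δ) + N ^ (1 - δ) * N ^ (δ / 2)) * N < N ^ (2 - η) := by
  filter_upwards [eventually_ge_atTop 1,
    (tendsto_rpow_atTop (by positivity : 0 < 3 * δ / 8)).eventually_gt_atTop 34] with N hN1 hN
  have hN0 : 0 < N := by linarith
  set M := N ^ (2 - η - 3 * δ / 8)
  have hmono : ∀ a ≤ 2 - η - 3 * δ / 8, N ^ a ≤ M := fun a ha =>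
    Real.rpow_le_rpow_of_exponent_le hN1 ha
  have h1 : N ^ (1 - δ) * N ^ (1 + η) ≤ M := by
    rw [← Real.rpow_add hN0]; exact hmono _ (by linarith)
  have h2 : N ^ (1 - δ) * N ≤ M := by
    rw [← Real.rpow_add_one hN0.ne']
    exact hmono _ (by linarith)
  have h3 : N ^ (1 - δ) * N ^ (δ / 2) * N ≤ M := by
    rw [← Real.rpow_add hN0, ← Real.rpow_add_one hN0.ne']
    exact hmono _ (by linarith)
  have hM : N ^ (2 - η) = M * N ^ (3 * δ / 8) := by
    rw [← Real.rpow_add hN0]; ring_nf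
  have hgap : M * 34 < M * N ^ (3 * δ / 8) := mul_lt_mul_of_pos_left hN (by positivity)
  nlinarith

theorem stmt13_general (δ : ℝ) (hδ0 : 0 < δ) :
    ∃ η₀ : ℝ, 0 < η₀ ∧ ∀ η : ℝ, 0 < η → η ≤ η₀ →
      ∃ n₀ : ℕ, ∀ n : ℕ, n₀ ≤ n →
        ∀ (G C Cstar : SimpleGraph (Fin n)) (k : ℕ),
          IsTwoFactor G C → (n : ℝ) ^ (2 - η) ≤ (auxEdgeCount G C : ℝ) →
          2 ≤ k → (k : ℝ) ≤ (n : ℝ) ^ (1 - δ) →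
          IsTwoFactor G Cstar → numCycles Cstar = k - 1 →
          ((symmDiff Cstar.edgeSet C.edgeSet).ncard : ℝ) ≤ 12 * ((k : ℝ) - 1) →
          ∃ (c c' : Cstar.ConnectedComponent) (X Y : Finset (Sym2 (Fin n))),
            ↑X ⊆ compEdges Cstar c ∧ ↑Y ⊆ compEdges Cstar c' ∧
            (n : ℝ) ^ (δ / 2) ≤ (X.card : ℝ) ∧ (n : ℝ) ^ (δ / 2) ≤ (Y.card : ℝ) ∧
            4 * ((X ∪ Y).card : ℝ) ^ (1 + η) ≤
              ∑ e ∈ X, (((auxNeighborSet G C e) ∩ ↑Y).ncard : ℝ) := by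
  refine ⟨δ / 8, by positivity, fun η hη hηδ => ?_⟩
  obtain ⟨n₀, hn₀⟩ := eventually_atTop.mp
    (tendsto_natCast_atTop_atTop.eventually (eventually_edge_count_bound_lt hδ0 hηδ))
  refine ⟨n₀, fun n hn G C Cstar k hC hA _ hk _ hcycles hsymm => ?_⟩
  by_contra! hcon
  have hbound := auxEdgeCount_le_of_block_bound hC (t := (n : ℝ) ^ (δ / 2)) (by positivity)
    hη.le fun c c' X Y hX hY hXt hYt => (hcon c c' X Y hX hY hXt hYt).le
  have hm : (numCycles Cstar : ℝ) ≤ (n : ℝ) ^ (1 - δ) := by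
    rw [hcycles]
    exact (Nat.cast_le.mpr (Nat.sub_le k 1)).trans hk
  have hd : ((symmDiff Cstar.edgeSet C.edgeSet).ncard : ℝ) ≤ 12 * (n : ℝ) ^ (1 - δ) := by
    linarith
  rw [Fintype.card_fin] at hbound
  refine lt_irrefl ((n : ℝ) ^ (2 - η)) ?_
  calc (n : ℝ) ^ (2 - η) ≤ auxEdgeCount G C := hA
    _ ≤ _ := hbound
    _ ≤ 8 * (n : ℝ) ^ (1 - δ) * (n : ℝ) ^ (1 + η) +
          2 * (12 * (n : ℝ) ^ (1 - δ) + (n : ℝ) ^ (1 - δ) * (n : ℝ) ^ (δ / 2)) * n := by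
        gcongr
    _ < (n : ℝ) ^ (2 - η) := hn₀ n hn

theorem stmt13 (δ : ℝ) (hδ0 : 0 < δ) (hδ1 : δ ≤ 1) :
    ∃ η₀ : ℝ, 0 < η₀ ∧ ∀ η : ℝ, 0 < η → η ≤ η₀ →
      ∃ n₀ : ℕ, ∀ n : ℕ, n₀ ≤ n →
        ∀ (G C Cstar : SimpleGraph (Fin n)) (k : ℕ),
          IsTwoFactor G C → (n : ℝ) ^ (2 - η) ≤ (auxEdgeCount G C : ℝ) →
          2 ≤ k → (k : ℝ) ≤ (n : ℝ) ^ (1 - δ) →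
          IsTwoFactor G Cstar → numCycles Cstar = k - 1 →
          ((symmDiff Cstar.edgeSet C.edgeSet).ncard : ℝ) ≤ 12 * ((k : ℝ) - 1) →
          ∃ (c c' : Cstar.ConnectedComponent) (X Y : Finset (Sym2 (Fin n))),
            ↑X ⊆ compEdges Cstar c ∧ ↑Y ⊆ compEdges Cstar c' ∧
            (n : ℝ) ^ (δ / 2) ≤ (X.card : ℝ) ∧ (n : ℝ) ^ (δ / 2) ≤ (Y.card : ℝ) ∧
            4 * ((X ∪ Y).card : ℝ) ^ (1 + η) ≤
              ∑ e ∈ X, (((auxNeighborSet G C e) ∩ ↑Y).ncard : ℝ) :=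
  stmt13_general δ hδ0
end

section
/- Let k ≥ 2 and m ≥ 2 be integers and set n := 3(k−1) + 2m. Let G be the n-vertex graph consisting of k−1 pairwise vertex-disjoint triangles, a complete bipartite graph K_{m,m} with parts A and B vertex-disjoint from all the triangles, together with an edge from every vertex of a triangle to every vertex of A. Then δ(G) = m, G contains a 2-factor consisting of exactly k cycles, and G contains no 2-factor consisting of fewer than k cycles. -/
/-- The vertex set of the example graph: `k-1` triangles, together with the two sides
`A` (= left) and `B` (= right) of a complete bipartite graph `K_{m,m}`. -/
abbrev ExVertex (k m : ℕ) : Type := (Fin (k - 1) × Fin 3) ⊕ (Fin m ⊕ Fin m)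

/-- The base relation of the example graph: edges within each triangle, all edges of
`K_{m,m}` between `A` and `B`, and all edges between triangle vertices and `A`. -/
def exRel (k m : ℕ) : ExVertex k m → ExVertex k m → Prop
  | Sum.inl (t, _), Sum.inl (t', _) => t = t'
  | Sum.inr (Sum.inl _), Sum.inr (Sum.inr _) => True
  | Sum.inl _, Sum.inr (Sum.inl _) => True
  | _, _ => False

/-- The example graph: `k-1` pairwise disjoint triangles, a `K_{m,m}` with parts `A` and
`B` disjoint from the triangles, plus all edges between triangle vertices and `A`. -/
def exGraph (k m : ℕ) : SimpleGraph (ExVertex k m) :=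
  SimpleGraph.fromRel (exRel k m)

/-!
The triangles and `K_{m,m}` together carry a 2-factor with exactly `k` cycles: rotate every
triangle and run once around `K_{m,m}`. Conversely, in any 2-factor each vertex of `B` has both
of its edges going to `A`; these are `2m` edge ends, i.e. the whole degree of `A`, so no edge of
the 2-factor joins `A` to a triangle. Hence each triangle and `K_{m,m}` are unions of cycles, and
there are at least `k` of them. The minimum degree `m` is attained on `B`.
-/

open Finset Function Sum

namespace SimpleGraph

variable {V α β : Type*} {G H : SimpleGraph V}

theorem Reachable.eq_of_forall_adj {f : V → β} (h : ∀ v w, H.Adj v w → f v = f w) {v w : V}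
    (hvw : H.Reachable v w) : f v = f w := by
  obtain ⟨p⟩ := hvw
  induction p with
  | nil => rfl
  | cons hadj _ ih => exact (h _ _ hadj).trans ih

theorem Reachable.of_sameCycle [Finite α] {σ : Equiv.Perm α} (g : α → V)
    (h : ∀ x, H.Reachable (g x) (g (σ x))) {x y : α} (hxy : σ.SameCycle x y) :
    H.Reachable (g x) (g y) := by
  obtain ⟨n, rfl⟩ := hxy.exists_nat_pow_eq
  clear hxy
  induction n with
  | zero => rfl
  | succ n ih => rw [pow_succ', Equiv.Perm.mul_apply]; exact ih.trans (h _)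

def ConnectedComponent.liftOfAdj (f : V → β) (h : ∀ v w, H.Adj v w → f v = f w) :
    H.ConnectedComponent → β :=
  ConnectedComponent.lift f fun _ _ p _ => Reachable.eq_of_forall_adj h ⟨p⟩

theorem ConnectedComponent.liftOfAdj_surjective {f : V → β} (hf : Surjective f)
    (h : ∀ v w, H.Adj v w → f v = f w) : Surjective (liftOfAdj f h) := by
  intro b
  obtain ⟨v, rfl⟩ := hf b
  exact ⟨H.connectedComponentMk v, rfl⟩

theorem card_le_card_connectedComponent [Finite V] {f : V → β} (hf : Surjective f)
    (h : ∀ v w, H.Adj v w → f v = f w) : Nat.card β ≤ Nat.card H.ConnectedComponent :=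
  Nat.card_le_card_of_surjective _ (ConnectedComponent.liftOfAdj_surjective hf h)

theorem card_connectedComponent_eq {f : V → β} (hf : Surjective f)
    (h : ∀ v w, H.Adj v w → f v = f w) (hreach : ∀ v w, f v = f w → H.Reachable v w) :
    Nat.card H.ConnectedComponent = Nat.card β := by
  refine Nat.card_eq_of_bijective _ ⟨?_, ConnectedComponent.liftOfAdj_surjective hf h⟩
  intro c d
  induction c, d using ConnectedComponent.ind₂ with
  | h v w => exact fun hvw => ConnectedComponent.sound (hreach v w hvw)

theorem IsRegularOfDegree.neighborFinset_subset [Fintype V] [DecidableRel H.Adj] {d : ℕ}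
    (hH : H.IsRegularOfDegree d) {A B : Finset V} (hAB : #A = #B)
    (hB : ∀ b ∈ B, H.neighborFinset b ⊆ A) {a : V} (ha : a ∈ A) : H.neighborFinset a ⊆ B := by
  have hle : ∀ x ∈ A, #(B.bipartiteAbove H.Adj x) ≤ #(H.neighborFinset x) := fun x _ =>
    card_le_card fun y hy => by simpa using (mem_filter.1 hy).2
  have hsum : ∑ x ∈ A, #(B.bipartiteAbove H.Adj x) = ∑ x ∈ A, #(H.neighborFinset x) := by
    calc ∑ x ∈ A, #(B.bipartiteAbove H.Adj x)
        = ∑ y ∈ B, #(A.bipartiteBelow H.Adj y) :=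
          sum_card_bipartiteAbove_eq_sum_card_bipartiteBelow _
      _ = ∑ y ∈ B, d := sum_congr rfl fun y hy => by
          rw [← hH.degree_eq y, ← card_neighborFinset_eq_degree]
          congr 1
          ext x
          simp only [bipartiteBelow, mem_filter, mem_neighborFinset, H.adj_comm x y]
          exact and_iff_right_of_imp fun hyx => hB y hy ((mem_neighborFinset _ _ _).2 hyx)
      _ = ∑ x ∈ A, #(H.neighborFinset x) := by simp [hAB, hH.degree_eq]
  have heq : B.bipartiteAbove H.Adj a = H.neighborFinset a :=
    eq_of_subset_of_card_le (fun y hy => by simpa using (mem_filter.1 hy).2)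
      ((sum_eq_sum_iff_of_le hle).1 hsum a ha).ge
  exact heq ▸ filter_subset _ _

def ofPerm (σ : Equiv.Perm V) : SimpleGraph V :=
  fromRel fun v w => σ v = w

section ofPerm

variable {σ : Equiv.Perm V} {v w : V}

theorem ofPerm_adj : (ofPerm σ).Adj v w ↔ v ≠ w ∧ (σ v = w ∨ σ w = v) :=
  fromRel_adj ..

theorem ofPerm_le (h : ∀ v, G.Adj v (σ v)) : ofPerm σ ≤ G := by
  intro v w hvw
  rcases (ofPerm_adj.1 hvw).2 with rfl | rfl
  exacts [h v, (h w).symm]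

theorem neighborSet_ofPerm (hv : σ v ≠ v) : (ofPerm σ).neighborSet v = {σ v, σ⁻¹ v} := by
  ext w
  simp only [mem_neighborSet, ofPerm_adj, Set.mem_insert_iff, Set.mem_singleton_iff,
    Equiv.Perm.eq_inv_iff_eq]
  constructor
  · rintro ⟨-, h | h⟩
    exacts [Or.inl h.symm, Or.inr h]
  · rintro (rfl | rfl)
    exacts [⟨hv.symm, Or.inl rfl⟩, ⟨fun h => hv (by simp [h]), Or.inr (by simp)⟩]

theorem ncard_neighborSet_ofPerm (hv : σ (σ v) ≠ v) :
    ((ofPerm σ).neighborSet v).ncard = 2 := by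
  rw [neighborSet_ofPerm fun h => hv (by rw [h, h])]
  exact Set.ncard_pair fun h => hv (by simp [h])

theorem isTwoFactor_ofPerm (hG : ∀ v, G.Adj v (σ v)) (hσ : ∀ v, σ (σ v) ≠ v) :
    IsTwoFactor G (ofPerm σ) :=
  ⟨ofPerm_le hG, fun _ => ncard_neighborSet_ofPerm (hσ _)⟩

theorem reachable_ofPerm_apply (σ : Equiv.Perm V) (v : V) : (ofPerm σ).Reachable v (σ v) := by
  by_cases h : σ v = v
  · rw [h]
  · exact Adj.reachable (ofPerm_adj.2 ⟨Ne.symm h, Or.inl rfl⟩)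

theorem ofPerm_adj_imp_eq {f : V → β} (hf : ∀ v, f (σ v) = f v) :
    ∀ v w, (ofPerm σ).Adj v w → f v = f w := by
  intro v w hvw
  rcases (ofPerm_adj.1 hvw).2 with rfl | rfl
  exacts [(hf v).symm, hf w]

end ofPerm

theorem IsTwoFactor.isRegularOfDegree [Fintype V] [DecidableRel H.Adj] (hH : IsTwoFactor G H) :
    H.IsRegularOfDegree 2 := fun v => by
  rw [← hH.2 v, Set.ncard_eq_toFinset_card']
  rfl

end SimpleGraph

theorem finRotate_apply_ne {n : ℕ} (hn : 2 ≤ n) (i : Fin n) : finRotate n i ≠ i :=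
  Equiv.Perm.mem_support.1 (by simp [support_finRotate_of_le hn])

theorem sameCycle_finRotate {n : ℕ} (hn : 2 ≤ n) (i j : Fin n) : (finRotate n).SameCycle i j :=
  (isCycle_finRotate_of_le hn).sameCycle (finRotate_apply_ne hn i) (finRotate_apply_ne hn j)

open SimpleGraph

section Example

variable {k m : ℕ}

theorem ncard_neighborSet_exGraph_inr_inr (b : Fin m) :
    ((exGraph k m).neighborSet (inr (inr b))).ncard = m := by
  have : (exGraph k m).neighborSet (inr (inr b)) = Set.range fun a => inr (inl a) := by
    ext (⟨t, i⟩ | a | b') <;> simp [exGraph, exRel]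
  rw [this, Set.ncard_range_of_injective (fun _ _ => by simp), Nat.card_fin]

theorem le_ncard_neighborSet_exGraph (v : ExVertex k m) :
    m ≤ ((exGraph k m).neighborSet v).ncard := by
  have key (f : Fin m → ExVertex k m) (hf : Injective f)
      (hsub : Set.range f ⊆ (exGraph k m).neighborSet v) :
      m ≤ ((exGraph k m).neighborSet v).ncard := by
    simpa [Set.ncard_range_of_injective hf] using Set.ncard_le_ncard hsub (Set.toFinite _)
  rcases v with ⟨t, i⟩ | a | b
  · exact key (inr ∘ inl) (fun _ _ => by simp) (by rintro _ ⟨a, rfl⟩; simp [exGraph, exRel])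
  · exact key (inr ∘ inr) (fun _ _ => by simp) (by rintro _ ⟨b, rfl⟩; simp [exGraph, exRel])
  · exact (ncard_neighborSet_exGraph_inr_inr b).ge

/-- Rotates every triangle and runs through `K_{m,m}` as `a₀ → b₀ → a₁ → b₁ → ⋯ → a₀`. -/
def exCyclePerm (k m : ℕ) : Equiv.Perm (ExVertex k m) :=
  Equiv.sumCongr (Equiv.prodCongr (Equiv.refl _) (finRotate 3))
    ((Equiv.sumComm _ _).trans (Equiv.sumCongr (finRotate m) (Equiv.refl _)))

@[simp] theorem exCyclePerm_inl (t : Fin (k - 1)) (i : Fin 3) :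
    exCyclePerm k m (inl (t, i)) = inl (t, finRotate 3 i) := rfl

@[simp] theorem exCyclePerm_inr_inl (a : Fin m) :
    exCyclePerm k m (inr (inl a)) = inr (inr a) := rfl

@[simp] theorem exCyclePerm_inr_inr (b : Fin m) :
    exCyclePerm k m (inr (inr b)) = inr (inl (finRotate m b)) := rfl

theorem exGraph_adj_exCyclePerm (v : ExVertex k m) : (exGraph k m).Adj v (exCyclePerm k m v) := by
  rcases v with ⟨t, i⟩ | a | b <;> simp [exGraph, exRel]

theorem exCyclePerm_apply_apply_ne (hm : 2 ≤ m) (v : ExVertex k m) :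
    exCyclePerm k m (exCyclePerm k m v) ≠ v := by
  have h3 : ∀ i : Fin 3, finRotate 3 (finRotate 3 i) ≠ i := by decide
  rcases v with ⟨t, i⟩ | a | b
  · simpa using h3 i
  · simpa using finRotate_apply_ne hm a
  · simpa using finRotate_apply_ne hm b

def exBlock : ExVertex k m → Option (Fin (k - 1))
  | inl (t, _) => some t
  | inr _ => none

theorem exBlock_surjective (hm : 0 < m) : Surjective (exBlock (k := k) (m := m)) := by
  rintro (_ | t)
  exacts [⟨inr (inl ⟨0, hm⟩), rfl⟩, ⟨inl (t, 0), rfl⟩]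

theorem card_option_fin_sub_one (hk : 1 ≤ k) : Nat.card (Option (Fin (k - 1))) = k := by
  rw [Finite.card_option, Nat.card_eq_fintype_card, Fintype.card_fin]
  omega

theorem reachable_of_exBlock_eq (hm : 2 ≤ m) {v w : ExVertex k m} (h : exBlock v = exBlock w) :
    (ofPerm (exCyclePerm k m)).Reachable v w := by
  set H := ofPerm (exCyclePerm k m)
  have hAA (a a' : Fin m) : H.Reachable (inr (inl a)) (inr (inl a')) :=
    Reachable.of_sameCycle (inr ∘ inl) (fun a => (reachable_ofPerm_apply _ (inr (inl a))).trans
      (reachable_ofPerm_apply _ (inr (inr a)))) (sameCycle_finRotate hm a a')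
  have hAK (a : Fin m) (x : Fin m ⊕ Fin m) : H.Reachable (inr (inl a)) (inr x) := by
    rcases x with a' | b
    · exact hAA a a'
    · exact (hAA a b).trans (reachable_ofPerm_apply _ (inr (inl b)))
  rcases v with ⟨t, i⟩ | x <;> rcases w with ⟨t', j⟩ | y <;>
    simp only [exBlock, reduceCtorEq, Option.some.injEq] at h
  · subst h
    exact Reachable.of_sameCycle (fun i => inl (t, i))
      (fun i => reachable_ofPerm_apply _ (inl (t, i))) (sameCycle_finRotate (by norm_num) i j)
  · exact (hAK ⟨0, by omega⟩ x).symm.trans (hAK _ y)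

theorem numCycles_ofPerm_exCyclePerm (hk : 1 ≤ k) (hm : 2 ≤ m) :
    numCycles (ofPerm (exCyclePerm k m)) = k := by
  rw [numCycles, card_connectedComponent_eq (exBlock_surjective (by omega))
    (ofPerm_adj_imp_eq fun v => ?_) fun _ _ => reachable_of_exBlock_eq hm,
    card_option_fin_sub_one hk]
  rcases v with ⟨t, i⟩ | x <;> rfl

/-- In a 2-factor of `exGraph` the `B`-side sends its `2m` edge ends into `A`, which then has
no degree left for the triangles. -/
theorem IsTwoFactor.not_adj_exGraph_inr_inl_inl {H : SimpleGraph (ExVertex k m)}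
    (hH : IsTwoFactor (exGraph k m) H) (a : Fin m) (x : Fin (k - 1) × Fin 3) :
    ¬ H.Adj (inr (inl a)) (inl x) := by
  classical
  let A : Finset (ExVertex k m) := univ.map (Embedding.inl.trans Embedding.inr)
  let B : Finset (ExVertex k m) := univ.map (Embedding.inr.trans Embedding.inr)
  have hB : ∀ b ∈ B, H.neighborFinset b ⊆ A := by
    simp only [B, A, mem_map, mem_univ, true_and, Embedding.trans_apply, Embedding.inr_apply]
    rintro _ ⟨b, rfl⟩ y hy
    have := hH.1 ((mem_neighborFinset _ _ _).1 hy)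
    rcases y with ⟨t, i⟩ | a | b' <;> simp_all [exGraph, exRel]
  intro h
  have := hH.isRegularOfDegree.neighborFinset_subset (by simp [A, B]) hB
    (a := inr (inl a)) (by simp [A]) ((mem_neighborFinset _ _ _).2 h)
  simp [B] at this

theorem IsTwoFactor.exBlock_eq_of_adj {H : SimpleGraph (ExVertex k m)}
    (hH : IsTwoFactor (exGraph k m) H) {v w : ExVertex k m} (hvw : H.Adj v w) :
    exBlock v = exBlock w := by
  have hG := hH.1 hvw
  rcases v with ⟨t, i⟩ | a | b <;> rcases w with ⟨t', j⟩ | a' | b' <;>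
    simp [exGraph, exRel, exBlock] at hG ⊢
  · exact hG.2.elim id Eq.symm
  · exact hH.not_adj_exGraph_inr_inl_inl _ _ hvw.symm
  · exact hH.not_adj_exGraph_inr_inl_inl _ _ hvw

theorem IsTwoFactor.le_numCycles_exGraph {H : SimpleGraph (ExVertex k m)}
    (hH : IsTwoFactor (exGraph k m) H) (hk : 1 ≤ k) (hm : 0 < m) : k ≤ numCycles H := by
  calc k = Nat.card (Option (Fin (k - 1))) := (card_option_fin_sub_one hk).symm
    _ ≤ numCycles H :=
      card_le_card_connectedComponent (exBlock_surjective hm) fun _ _ => hH.exBlock_eq_of_adj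

end Example

theorem stmt16 (k m : ℕ) (hk : 2 ≤ k) (hm : 2 ≤ m) :
    -- δ(G) = m
    ((∀ x : ExVertex k m, m ≤ ((exGraph k m).neighborSet x).ncard) ∧
      (∃ x : ExVertex k m, ((exGraph k m).neighborSet x).ncard = m)) ∧
    -- G has a 2-factor consisting of exactly k cycles
    (∃ H : SimpleGraph (ExVertex k m), IsTwoFactor (exGraph k m) H ∧ numCycles H = k) ∧
    -- G has no 2-factor consisting of fewer than k cycles
    ¬ ∃ H : SimpleGraph (ExVertex k m), IsTwoFactor (exGraph k m) H ∧ numCycles H < k := by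
  refine ⟨⟨le_ncard_neighborSet_exGraph, inr (inr ⟨0, by omega⟩),
    ncard_neighborSet_exGraph_inr_inr _⟩, ⟨ofPerm (exCyclePerm k m), ?_, ?_⟩, ?_⟩
  · exact isTwoFactor_ofPerm exGraph_adj_exCyclePerm (exCyclePerm_apply_apply_ne hm)
  · exact numCycles_ofPerm_exCyclePerm (by omega) hm
  · rintro ⟨H, hH, hlt⟩
    exact hlt.not_ge (hH.le_numCycles_exGraph (by omega) (by omega))
end
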